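/- arXiv:1912.04500 — 10 statements merged into one kernel-verified Lean document; each statement's English description precedes it below -/
import Mathlib

section
/- Let 0 ≤ k ≤ n. If A and B are complex matrices whose rows and columns are indexed by S_{k,n} and which are both invariant under the diagonal action of G = S_k × S_n (that is, A_{g·σ, g·τ} = A_{σ,τ} for all g ∈ G and all σ, τ ∈ S_{k,n}, and likewise for B), then AB = BA. (This is the commutativity underlying the fact that (S_k × S_n, diag(S_k) × S_{n−k}) is a Gelfand pair.) -/
open scoped Classical

/-- The action of `S_k × S_n` on the set `S_{k,n}` of injections `[k] ↪ [n]`: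
`(π, ρ) · σ = ρ ∘ σ ∘ π⁻¹`. -/
def injAct {k n : ℕ} (π : Equiv.Perm (Fin k)) (ρ : Equiv.Perm (Fin n))
    (σ : Fin k ↪ Fin n) : Fin k ↪ Fin n :=
  (π.symm.toEmbedding.trans σ).trans ρ.toEmbedding

/-! The matrices commute by Gelfand's trick: if every pair `(σ, τ)` is swapped by a single group
element, then every invariant matrix is symmetric, and since `AB` is invariant as well,
`AB = (AB)ᵀ = BᵀAᵀ = BA`.

To swap `σ` and `τ`, regard the arrows `σ i ↦ τ i` as a partial injection `p` of `[n]`. Swapping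
amounts to a permutation `ρ` of `[n]` reversing every arrow of `p`; `π` is then read off from `ρ`.
Each connected component of `p` is a path or a cycle, and `ρ` reflects the components one at a
time. -/

open Function Equiv Finset

namespace PEquiv

variable {α β : Type*}

def dom [Fintype α] (p : α ≃. β) : Finset α := {a | (p a).isSome}

@[simp] theorem mem_dom [Fintype α] {p : α ≃. β} {a : α} : a ∈ p.dom ↔ (p a).isSome := by
  simp [dom]

theorem card_dom_symm [Fintype α] [Fintype β] (p : α ≃. β) : #p.symm.dom = #p.dom := by
  have hget (b : β) (hb : b ∈ p.symm.dom) : p ((p.symm b).get (mem_dom.1 hb)) = some b :=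
    (eq_some_iff p).1 (Option.some_get _).symm
  refine Finset.card_bij (fun b hb => (p.symm b).get (mem_dom.1 hb)) (fun b hb => ?_)
    (fun b hb b' hb' h => ?_) (fun a ha => ?_)
  · simp [hget b hb]
  · simpa [hget b hb] using ((hget b' hb').symm.trans (congrArg p h).symm).symm
  · obtain ⟨b, hb⟩ := Option.isSome_iff_exists.1 (mem_dom.1 ha)
    have hba : p.symm b = some a := (eq_some_iff p).2 hb
    exact ⟨b, by simp [hba], by simp [hba]⟩

theorem symm_eq_none_iff (p : α ≃. β) {b : β} : p.symm b = none ↔ ∀ a, p a ≠ some b := by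
  simp [Option.eq_none_iff_forall_ne_some, eq_some_iff]

theorem ofSet_trans_apply (s : Set α) [DecidablePred (· ∈ s)] (p : α ≃. β) (a : α) :
    (ofSet s).trans p a = if a ∈ s then p a else none := by
  by_cases h : a ∈ s <;> simp [PEquiv.trans, ofSet, h]

theorem ofSet_trans_eq_some {s : Set α} [DecidablePred (· ∈ s)] {p : α ≃. β} {a : α} {b : β} :
    (ofSet s).trans p a = some b ↔ a ∈ s ∧ p a = some b := by
  simp [trans_eq_some]

theorem card_dom_ofSet_trans_lt [Fintype α] (p : α ≃. β) {s : Set α} [DecidablePred (· ∈ s)]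
    {a : α} (ha : (p a).isSome) (has : a ∉ s) : #((ofSet s).trans p).dom < #p.dom := by
  refine Finset.card_lt_card ((Finset.ssubset_iff_of_subset fun b hb => ?_).2 ⟨a, by simpa, ?_⟩)
  · obtain ⟨c, hc⟩ := Option.isSome_iff_exists.1 (mem_dom.1 hb)
    simp [(ofSet_trans_eq_some.1 hc).2]
  · simp [Option.isSome_iff_exists, ofSet_trans_eq_some, has]

def Reverses (π : Perm α) (p : α ≃. α) : Prop :=
  ∀ a b, p a = some b → p (π b) = some (π a)

def FixesIsolated (π : Perm α) (p : α ≃. α) : Prop :=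
  ∀ a, p a = none → p.symm a = none → π a = a

theorem exists_maximal_path [Fintype α] (p : α ≃. α) {a : α} (ha : p.symm a = none) :
    ∃ (m : ℕ) (x : Fin (m + 1) → α), Injective x ∧ x 0 = a ∧
      (∀ i : Fin m, p (x i.castSucc) = some (x i.succ)) ∧ p (x (Fin.last m)) = none := by
  cases hpa : p a with
  | none => exact ⟨0, fun _ => a, fun i j _ => Subsingleton.elim (α := Fin 1) i j, rfl, nofun, hpa⟩
  | some b =>
    set q := (ofSet {a}ᶜ).trans p
    have hb : q.symm b = none := by
      refine (symm_eq_none_iff q).2 fun c hc => ?_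
      rw [ofSet_trans_eq_some] at hc
      exact hc.1 (p.inj hc.2 hpa)
    obtain ⟨m, x, hx, rfl, hedge, hlast⟩ := exists_maximal_path q hb
    have hxa : a ∉ Set.range x := by
      rintro ⟨i, hi⟩
      cases i using Fin.cases with
      | zero => exact (symm_eq_none_iff p).1 ha a (hi ▸ hpa)
      | succ j => exact (symm_eq_none_iff p).1 ha _ (hi ▸ (ofSet_trans_eq_some.1 (hedge j)).2)
    refine ⟨m + 1, Fin.cons a x, Fin.cons_injective_iff.2 ⟨hxa, hx⟩, rfl, fun i => ?_, ?_⟩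
    · cases i using Fin.cases with
      | zero => simpa using hpa
      | succ j => simpa [← Fin.succ_castSucc] using (ofSet_trans_eq_some.1 (hedge j)).2
    · have : x (Fin.last m) ≠ a := fun h => hxa ⟨_, h⟩
      simpa [q, ← Fin.succ_last, ofSet_trans_apply, this] using hlast
termination_by #p.dom
decreasing_by exact card_dom_ofSet_trans_lt p (a := a) (by simp [hpa]) (by simp)

/-- `x` lists a whole connected component of `p` along its arrows: a path, closed up into a cycle
when `p (x (Fin.last m)) = some (x 0)`. -/
structure IsComponentPath (p : α ≃. α) {m : ℕ} (x : Fin (m + 1) → α) : Prop where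
  injective : Injective x
  apply_castSucc (i : Fin m) : p (x i.castSucc) = some (x i.succ)
  eq_zero_of_apply_last {b : α} : p (x (Fin.last m)) = some b → b = x 0
  eq_last_of_apply_eq_zero {a : α} : p a = some (x 0) → a = x (Fin.last m)

noncomputable def pathReflection {m : ℕ} {x : Fin (m + 1) → α} (hx : Injective x) : Perm α :=
  Fin.revPerm.extendDomain (Equiv.ofInjective x hx)

section Component

variable {p : α ≃. α} {m : ℕ} {x : Fin (m + 1) → α}

theorem pathReflection_apply (hx : Injective x) (i : Fin (m + 1)) :
    pathReflection hx (x i) = x i.rev :=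
  Fin.revPerm.extendDomain_apply_image (Equiv.ofInjective x hx) i

theorem pathReflection_apply_of_notMem (hx : Injective x) {a : α} (ha : a ∉ Set.range x) :
    pathReflection hx a = a :=
  Fin.revPerm.extendDomain_apply_not_subtype _ ha

namespace IsComponentPath

theorem mem_range_iff (hx : IsComponentPath p x) {a b : α} (hab : p a = some b) :
    a ∈ Set.range x ↔ b ∈ Set.range x := by
  constructor
  · rintro ⟨i, rfl⟩
    cases i using Fin.lastCases with
    | last => exact ⟨0, (hx.eq_zero_of_apply_last hab).symm⟩
    | cast j => exact ⟨j.succ, Option.some_injective _ ((hx.apply_castSucc j).symm.trans hab)⟩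
  · rintro ⟨i, rfl⟩
    cases i using Fin.cases with
    | zero => exact ⟨_, (hx.eq_last_of_apply_eq_zero hab).symm⟩
    | succ j => exact ⟨j.castSucc, p.inj (hx.apply_castSucc j) hab⟩

theorem pathReflection_reverses_of_mem (hx : IsComponentPath p x) {a b : α}
    (hab : p a = some b) (ha : a ∈ Set.range x) :
    p (pathReflection hx.injective b) = some (pathReflection hx.injective a) := by
  obtain ⟨i, rfl⟩ := ha
  cases i using Fin.lastCases with
  | last =>
    obtain rfl := hx.eq_zero_of_apply_last hab
    simpa [pathReflection_apply] using hab
  | cast j =>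
    obtain rfl := Option.some_injective _ ((hx.apply_castSucc j).symm.trans hab)
    simpa [pathReflection_apply, Fin.rev_succ, Fin.rev_castSucc] using hx.apply_castSucc j.rev

theorem pathReflection_fixesIsolated (hx : IsComponentPath p x) {a : α} (ha : p a = none)
    (hsa : p.symm a = none) : pathReflection hx.injective a = a := by
  by_cases hxa : a ∈ Set.range x
  · obtain ⟨i, rfl⟩ := hxa
    rcases m with _ | n
    · simp [pathReflection_apply, Subsingleton.elim (α := Fin 1) i.rev i]
    · cases i using Fin.lastCases with
      | last => exact ((symm_eq_none_iff p).1 hsa _ (hx.apply_castSucc (Fin.last n))).elim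
      | cast j => simp [hx.apply_castSucc j] at ha
  · exact pathReflection_apply_of_notMem _ hxa

/-- A reversal of `p` off the component `x` fixes the component pointwise, so composing it with
the reflection of `x` reverses all of `p`. -/
theorem exists_reverses (hx : IsComponentPath p x) {π' : Perm α}
    (hπ' : Reverses π' ((ofSet (Set.range x)ᶜ).trans p))
    (hfix : FixesIsolated π' ((ofSet (Set.range x)ᶜ).trans p)) :
    ∃ π : Perm α, Reverses π p ∧ FixesIsolated π p := by
  have hfix_range (i : Fin (m + 1)) : π' (x i) = x i := by
    refine hfix _ (by simp [ofSet_trans_apply]) ((symm_eq_none_iff _).2 fun c hc => ?_)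
    obtain ⟨hc, hcx⟩ := ofSet_trans_eq_some.1 hc
    exact hc ((hx.mem_range_iff hcx).2 ⟨i, rfl⟩)
  have hmaps_compl {a : α} (ha : a ∉ Set.range x) : π' a ∉ Set.range x := by
    rintro ⟨i, hi⟩
    exact ha ⟨i, π'.injective ((hfix_range i).trans hi)⟩
  refine ⟨pathReflection hx.injective * π', fun a b hab => ?_, fun a ha hsa => ?_⟩
  · by_cases hxa : a ∈ Set.range x
    · obtain ⟨i, rfl⟩ := hxa
      obtain ⟨j, rfl⟩ := (hx.mem_range_iff hab).1 ⟨i, rfl⟩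
      simpa [hfix_range] using hx.pathReflection_reverses_of_mem hab ⟨i, rfl⟩
    · have hxb : b ∉ Set.range x := fun h => hxa ((hx.mem_range_iff hab).2 h)
      obtain ⟨hπb, hπ⟩ := ofSet_trans_eq_some.1 (hπ' a b (ofSet_trans_eq_some.2 ⟨hxa, hab⟩))
      simpa [pathReflection_apply_of_notMem _ (hmaps_compl hxa),
        pathReflection_apply_of_notMem _ hπb] using hπ
  · have hπa : π' a = a := by
      by_cases hxa : a ∈ Set.range x
      · obtain ⟨i, rfl⟩ := hxa
        exact hfix_range i
      · refine hfix a (by simp [ofSet_trans_apply, hxa, ha]) ((symm_eq_none_iff _).2 fun c hc => ?_)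
        exact (symm_eq_none_iff p).1 hsa c (ofSet_trans_eq_some.1 hc).2
    simpa [hπa] using hx.pathReflection_fixesIsolated ha hsa

end IsComponentPath

end Component

variable [Fintype α]

theorem exists_isComponentPath_of_symm_eq_none (p : α ≃. α) {a : α} (ha : p.symm a = none) :
    ∃ (m : ℕ) (x : Fin (m + 1) → α), IsComponentPath p x ∧ x 0 = a := by
  obtain ⟨m, x, hx, rfl, hedge, hlast⟩ := exists_maximal_path p ha
  exact ⟨m, x, ⟨hx, hedge, fun hb => by simp [hlast] at hb,
    fun hc => ((symm_eq_none_iff p).1 ha _ hc).elim⟩, rfl⟩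

/-- When `p` has no path starts, cutting an arrow `w ↦ a` leaves a path from `a` that must end at
`w`: together with the arrow it forms a cycle. -/
theorem exists_isComponentPath_of_dom_eq {p : α ≃. α} (hdom : p.dom = p.symm.dom) {w a : α}
    (hwa : p w = some a) : ∃ (m : ℕ) (x : Fin (m + 1) → α), IsComponentPath p x ∧
      x (Fin.last m) = w := by
  set q := (ofSet {w}ᶜ).trans p
  have ha : q.symm a = none := (symm_eq_none_iff q).2 fun c hc =>
    (ofSet_trans_eq_some.1 hc).1 (p.inj (ofSet_trans_eq_some.1 hc).2 hwa)
  obtain ⟨m, x, hx, rfl, hedge, hlast⟩ := exists_maximal_path q ha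
  have hw : x (Fin.last m) = w := by
    by_contra hne
    have hnone : p (x (Fin.last m)) = none := by simpa [q, ofSet_trans_apply, hne] using hlast
    obtain ⟨c, hc⟩ : ∃ c, p c = some (x (Fin.last m)) := by
      cases m with
      | zero => exact ⟨w, hwa⟩
      | succ n => exact ⟨_, (ofSet_trans_eq_some.1 (hedge (Fin.last n))).2⟩
    have : x (Fin.last m) ∈ p.dom := hdom ▸ mem_dom.2 (by simp [(eq_some_iff p).2 hc])
    simp [hnone] at this
  refine ⟨m, x, ⟨hx, fun i => (ofSet_trans_eq_some.1 (hedge i)).2, fun hb => ?_,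
    fun hc => hw ▸ p.inj hc hwa⟩, hw⟩
  rw [hw, hwa] at hb
  exact (Option.some_injective _ hb).symm

theorem exists_isComponentPath_or_eq_bot (p : α ≃. α) :
    (∃ (m : ℕ) (x : Fin (m + 1) → α), IsComponentPath p x ∧ ∃ i, (p (x i)).isSome) ∨ p = ⊥ := by
  by_cases hstart : ∃ a, (p a).isSome ∧ p.symm a = none
  · obtain ⟨a, hpa, ha⟩ := hstart
    obtain ⟨m, x, hx, rfl⟩ := exists_isComponentPath_of_symm_eq_none p ha
    exact .inl ⟨m, x, hx, 0, hpa⟩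
  push Not at hstart
  have hdom : p.dom = p.symm.dom := Finset.eq_of_subset_of_card_le
    (fun a ha => mem_dom.2 (Option.ne_none_iff_isSome.1 (hstart a (mem_dom.1 ha))))
    (card_dom_symm p).le
  by_cases hne : ∃ w a, p w = some a
  · obtain ⟨w, a, hwa⟩ := hne
    obtain ⟨m, x, hx, hw⟩ := exists_isComponentPath_of_dom_eq hdom hwa
    exact .inl ⟨m, x, hx, Fin.last m, by simp [hw, hwa]⟩
  push Not at hne
  exact .inr (PEquiv.ext fun a => Option.eq_none_iff_forall_ne_some.2 (hne a))

/-- The second property lets the reversal be built one component at a time. -/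
theorem exists_reverses_fixesIsolated (p : α ≃. α) :
    ∃ π : Perm α, Reverses π p ∧ FixesIsolated π p := by
  obtain ⟨m, x, hx, i, hi⟩ | rfl := exists_isComponentPath_or_eq_bot p
  · have hlt : #((ofSet (Set.range x)ᶜ).trans p).dom < #p.dom :=
      card_dom_ofSet_trans_lt p hi (by simp)
    obtain ⟨π', hπ', hfix⟩ := exists_reverses_fixesIsolated ((ofSet (Set.range x)ᶜ).trans p)
    exact hx.exists_reverses hπ' hfix
  · exact ⟨1, fun a b hab => by simp at hab, fun _ _ _ => rfl⟩
termination_by #p.dom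
decreasing_by exact hlt

end PEquiv

namespace Function.Embedding

variable {ι α : Type*}

noncomputable def toPEquiv (e : ι ↪ α) : ι ≃. α where
  toFun i := some (e i)
  invFun := partialInv e
  inv i a := by rw [e.injective.isPartialInv, Option.some_inj]

theorem symm_trans_toPEquiv_eq_some {σ τ : ι ↪ α} {a b : α} :
    σ.toPEquiv.symm.trans τ.toPEquiv a = some b ↔ ∃ i, σ i = a ∧ τ i = b := by
  simp [PEquiv.trans_eq_some, PEquiv.eq_some_iff, toPEquiv]

instance : MulAction (Perm ι × Perm α) (ι ↪ α) where
  smul g σ := (g.1.symm.toEmbedding.trans σ).trans g.2.toEmbedding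
  one_smul _ := rfl
  mul_smul _ _ _ := rfl

theorem prod_smul_apply (g : Perm ι × Perm α) (σ : ι ↪ α) (i : ι) :
    (g • σ) i = g.2 (σ (g.1.symm i)) :=
  rfl

theorem exists_smul_swap [Finite α] (σ τ : ι ↪ α) :
    ∃ g : Perm ι × Perm α, g • σ = τ ∧ g • τ = σ := by
  have := Fintype.ofFinite α
  have := Finite.of_injective σ σ.injective
  obtain ⟨ρ, hρ, -⟩ := (σ.toPEquiv.symm.trans τ.toPEquiv).exists_reverses_fixesIsolated
  have hπ (i : ι) : ∃ j, σ j = ρ (τ i) ∧ τ j = ρ (σ i) :=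
    symm_trans_toPEquiv_eq_some.1 (hρ _ _ (symm_trans_toPEquiv_eq_some.2 ⟨i, rfl, rfl⟩))
  choose π hπσ hπτ using hπ
  have hπinj : Injective π := fun i j h => τ.injective (ρ.injective (by rw [← hπσ, ← hπσ, h]))
  set π' := Equiv.ofBijective π (Finite.injective_iff_bijective.1 hπinj)
  refine ⟨(π', ρ), ?_, ?_⟩ <;> ext i <;> obtain ⟨j, rfl⟩ := π'.surjective i
  · simp [prod_smul_apply, π', hπτ]
  · simp [prod_smul_apply, π', hπσ]

end Function.Embedding

namespace Matrix

variable {G X R : Type*}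

theorem mul_apply_smul_smul [Fintype X] [Group G] [MulAction G X] [NonUnitalNonAssocSemiring R]
    {A B : Matrix X X R} (hA : ∀ (g : G) x y, A (g • x) (g • y) = A x y)
    (hB : ∀ (g : G) x y, B (g • x) (g • y) = B x y) (g : G) (x y : X) :
    (A * B) (g • x) (g • y) = (A * B) x y := by
  rw [mul_apply, mul_apply, ← Equiv.sum_comp (MulAction.toPerm g)]
  simp [hA, hB]

theorem transpose_eq_self_of_smul_swap [SMul G X] {M : Matrix X X R}
    (hM : ∀ (g : G) x y, M (g • x) (g • y) = M x y)
    (hswap : ∀ x y : X, ∃ g : G, g • x = y ∧ g • y = x) : Mᵀ = M := by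
  ext x y
  obtain ⟨g, hx, hy⟩ := hswap x y
  calc M y x = M (g • x) (g • y) := by rw [hx, hy]
    _ = M x y := hM g x y

theorem mul_comm_of_smul_swap [Fintype X] [Group G] [MulAction G X] [CommSemiring R]
    {A B : Matrix X X R} (hA : ∀ (g : G) x y, A (g • x) (g • y) = A x y)
    (hB : ∀ (g : G) x y, B (g • x) (g • y) = B x y)
    (hswap : ∀ x y : X, ∃ g : G, g • x = y ∧ g • y = x) : A * B = B * A :=
  calc A * B = (A * B)ᵀ := (transpose_eq_self_of_smul_swap (mul_apply_smul_smul hA hB) hswap).symm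
    _ = Bᵀ * Aᵀ := transpose_mul A B
    _ = B * A := by
      rw [transpose_eq_self_of_smul_swap hA hswap, transpose_eq_self_of_smul_swap hB hswap]

end Matrix

theorem stmt_0_general (k n : ℕ)
    (A B : Matrix (Fin k ↪ Fin n) (Fin k ↪ Fin n) ℂ)
    (hA : ∀ (π : Equiv.Perm (Fin k)) (ρ : Equiv.Perm (Fin n)) (σ τ : Fin k ↪ Fin n),
      A (injAct π ρ σ) (injAct π ρ τ) = A σ τ)
    (hB : ∀ (π : Equiv.Perm (Fin k)) (ρ : Equiv.Perm (Fin n)) (σ τ : Fin k ↪ Fin n),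
      B (injAct π ρ σ) (injAct π ρ τ) = B σ τ) :
    A * B = B * A :=
  Matrix.mul_comm_of_smul_swap (fun g => hA g.1 g.2) (fun g => hB g.1 g.2)
    Function.Embedding.exists_smul_swap

/-- If `A` and `B` are complex matrices indexed by injections `[k] ↪ [n]`, both invariant
under the diagonal action of `G = S_k × S_n`, then `AB = BA`. -/
theorem stmt_0 (k n : ℕ) (hkn : k ≤ n)
    (A B : Matrix (Fin k ↪ Fin n) (Fin k ↪ Fin n) ℂ)
    (hA : ∀ (π : Equiv.Perm (Fin k)) (ρ : Equiv.Perm (Fin n)) (σ τ : Fin k ↪ Fin n),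
      A (injAct π ρ σ) (injAct π ρ τ) = A σ τ)
    (hB : ∀ (π : Equiv.Perm (Fin k)) (ρ : Equiv.Perm (Fin n)) (σ τ : Fin k ↪ Fin n),
      B (injAct π ρ σ) (injAct π ρ τ) = B σ τ) :
    A * B = B * A :=
  stmt_0_general k n A B hA hB
end

section
/- Let 0 ≤ k ≤ n. For every pair of injections σ, τ ∈ S_{k,n} there exists g ∈ S_k × S_n such that g·σ = τ and g·τ = σ. (Hence every orbital of G acting diagonally on S_{k,n} × S_{k,n} is symmetric, so the injection scheme is a symmetric association scheme.) -/
open scoped Classical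

/-- Every partial injection `G` on a finite type (with domain `D`) is conjugate to its
inverse by a permutation `π`. -/
private lemma lemP {I : Type*} [Fintype I] [DecidableEq I] (G : I → I) (D : Finset I) :
    Set.InjOn G ↑D →
      ∃ π : Equiv.Perm I,
        (∀ i ∈ D, π i ∈ D.image G) ∧
        (∀ i ∈ D, π (G i) ∈ D ∧ G (π (G i)) = π i) ∧
        (∀ x, x ∉ D → x ∉ D.image G → π x = x) := by
  induction D using Finset.strongInductionOn with
  | _ D IH =>
  intro hG
  by_cases h1 : ∃ s ∈ D, s ∉ D.image G
  · -- "path" case: peel the whole path starting at `s`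
    obtain ⟨s, hsD, hsG⟩ := h1
    set f : ℕ → I := fun t => G^[t] s with hfdef
    have hfsucc : ∀ t, f (t + 1) = G (f t) := fun t => Function.iterate_succ_apply' G t s
    have hf0 : f 0 = s := rfl
    have finj : ∀ a b, a < b → (∀ j, j < b → f j ∈ D) → f a ≠ f b := by
      intro a
      induction a using Nat.strong_induction_on with
      | _ a iha =>
      intro b hab hmem heq
      match a, hab with
      | 0, hab =>
        obtain ⟨b', rfl⟩ : ∃ b', b = b' + 1 := ⟨b - 1, by omega⟩
        apply hsG
        rw [Finset.mem_image]
        exact ⟨f b', hmem b' (by omega), by rw [← hfsucc, ← heq, hf0]⟩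
      | (a' + 1), hab =>
        obtain ⟨b', rfl⟩ : ∃ b', b = b' + 1 := ⟨b - 1, by omega⟩
        have hab' : f a' = f b' := by
          apply hG (Finset.mem_coe.mpr (hmem a' (by omega))) (Finset.mem_coe.mpr (hmem b' (by omega)))
          rw [← hfsucc, ← hfsucc]; exact heq
        exact iha a' (by omega) b' (by omega) (fun j hj => hmem j (by omega)) hab'
    have hex : ∃ t, f t ∉ D := by
      by_contra hall
      push_neg at hall
      obtain ⟨a, b, hne, heq⟩ := Finite.exists_ne_map_eq_of_infinite f
      rcases hne.lt_or_gt with h | h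
      · exact finj a b h (fun j _ => hall j) heq
      · exact finj b a h (fun j _ => hall j) heq.symm
    set m := Nat.find hex with hmdef
    have hfm : f m ∉ D := Nat.find_spec hex
    have hmem : ∀ j, j < m → f j ∈ D := fun j hj => not_not.mp (Nat.find_min hex hj)
    have hm1 : 0 < m := by
      rcases Nat.eq_zero_or_pos m with h | h
      · exfalso; rw [h] at hfm; rw [hf0] at hfm; exact hfm hsD
      · exact h
    have pinj : ∀ a b, a ≤ m → b ≤ m → f a = f b → a = b := by
      intro a b ha hb heq
      rcases lt_trichotomy a b with h | h | h
      · exact absurd heq (finj a b h (fun j hj => hmem j (by omega)))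
      · exact h
      · exact absurd heq.symm (finj b a h (fun j hj => hmem j (by omega)))
    set rf : I → I := fun x => if h : ∃ j, j ≤ m ∧ f j = x then f (m - Nat.find h) else x
      with hrfdef
    have hrf1 : ∀ j, j ≤ m → rf (f j) = f (m - j) := by
      intro j hj
      have hex' : ∃ j', j' ≤ m ∧ f j' = f j := ⟨j, hj, rfl⟩
      simp only [hrfdef]
      rw [dif_pos hex']
      have hsp := Nat.find_spec hex'
      have : Nat.find hex' = j := pinj _ _ hsp.1 hj hsp.2
      rw [this]
    have hrf2 : ∀ x, (∀ j, j ≤ m → f j ≠ x) → rf x = x := by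
      intro x hx
      simp only [hrfdef]
      rw [dif_neg]
      rintro ⟨j, hj, hfj⟩
      exact hx j hj hfj
    have hinv : Function.Involutive rf := by
      intro x
      by_cases h : ∃ j, j ≤ m ∧ f j = x
      · obtain ⟨j, hj, rfl⟩ := h
        rw [hrf1 j hj, hrf1 (m - j) (by omega)]
        congr 1
        omega
      · have h' : ∀ j, j ≤ m → f j ≠ x := fun j hj hfj => h ⟨j, hj, hfj⟩
        rw [hrf2 x h', hrf2 x h']
    set r : Equiv.Perm I := Function.Involutive.toPerm rf hinv with hrdef
    have hr : ∀ x, r x = rf x := fun x => rfl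
    set P : Finset I := (Finset.range (m + 1)).image f with hPdef
    set D' : Finset I := D \ P with hD'def
    have hD'sub : D' ⊆ D := Finset.sdiff_subset
    have hsP : s ∈ P := Finset.mem_image.mpr ⟨0, Finset.mem_range.mpr (by omega), hf0⟩
    have hss : D' ⊂ D := by
      rw [Finset.ssubset_iff_of_subset hD'sub]
      exact ⟨s, hsD, fun hs => (Finset.mem_sdiff.mp hs).2 hsP⟩
    have hGD'P : ∀ i ∈ D', ∀ j, j ≤ m → G i ≠ f j := by
      intro i hi j hj heq
      have hiD := hD'sub hi
      rcases Nat.eq_zero_or_pos j with h0 | h0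
      · subst h0; rw [hf0] at heq
        exact hsG (Finset.mem_image.mpr ⟨i, hiD, heq⟩)
      · obtain ⟨j', rfl⟩ : ∃ j', j = j' + 1 := ⟨j - 1, by omega⟩
        rw [hfsucc] at heq
        have hieq : i = f j' :=
          hG (Finset.mem_coe.mpr hiD) (Finset.mem_coe.mpr (hmem j' (by omega))) heq
        have : i ∈ P := Finset.mem_image.mpr ⟨j', Finset.mem_range.mpr (by omega), hieq.symm⟩
        exact (Finset.mem_sdiff.mp hi).2 this
    obtain ⟨π', c1, c2, c3⟩ := IH D' hss (hG.mono (Finset.coe_subset.mpr hD'sub))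
    have hfixP : ∀ j, j ≤ m → π' (f j) = f j := by
      intro j hj
      apply c3
      · intro hmem'
        rcases Nat.lt_or_ge j m with h | h
        · exact (Finset.mem_sdiff.mp hmem').2
            (Finset.mem_image.mpr ⟨j, Finset.mem_range.mpr (by omega), rfl⟩)
        · have : j = m := by omega
          subst this
          exact hfm (hD'sub hmem')
      · intro hmem'
        obtain ⟨i, hi, heq⟩ := Finset.mem_image.mp hmem'
        exact hGD'P i hi j hj heq
    have hrfixD' : ∀ x ∈ D', r x = x := by
      intro x hx
      rw [hr]; apply hrf2
      intro j hj heq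
      rcases Nat.lt_or_ge j m with h | h
      · exact (Finset.mem_sdiff.mp hx).2
          (heq ▸ Finset.mem_image.mpr ⟨j, Finset.mem_range.mpr (by omega), rfl⟩)
      · have : j = m := by omega
        subst this
        rw [← heq] at hx
        exact hfm (hD'sub hx)
    have hrfixGD' : ∀ x ∈ D'.image G, r x = x := by
      intro x hx
      obtain ⟨i, hi, rfl⟩ := Finset.mem_image.mp hx
      rw [hr]; apply hrf2
      intro j hj heq
      exact hGD'P i hi j hj heq.symm
    refine ⟨π'.trans r, ?_, ?_, ?_⟩
    · intro i hi
      by_cases hiP : i ∈ P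
      · obtain ⟨j, hjr, rfl⟩ := Finset.mem_image.mp hiP
        rw [Finset.mem_range] at hjr
        have hjm : j < m := by
          rcases Nat.lt_or_ge j m with h | h
          · exact h
          · exfalso; have : j = m := by omega
            subst this; exact hfm hi
        simp only [Equiv.trans_apply]
        rw [hfixP j (by omega), hr, hrf1 j (by omega)]
        exact Finset.mem_image.mpr
          ⟨f (m - j - 1), hmem _ (by omega), (hfsucc _).symm.trans (by congr 1; omega)⟩
      · have hiD' : i ∈ D' := Finset.mem_sdiff.mpr ⟨hi, hiP⟩
        simp only [Equiv.trans_apply]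
        have h1' := c1 i hiD'
        rw [hrfixGD' _ h1']
        exact Finset.image_subset_image hD'sub h1'
    · intro i hi
      by_cases hiP : i ∈ P
      · obtain ⟨j, hjr, rfl⟩ := Finset.mem_image.mp hiP
        rw [Finset.mem_range] at hjr
        have hjm : j < m := by
          rcases Nat.lt_or_ge j m with h | h
          · exact h
          · exfalso; have : j = m := by omega
            subst this; exact hfm hi
        have e1 : (π'.trans r) (G (f j)) = f (m - (j + 1)) := by
          rw [← hfsucc, Equiv.trans_apply, hfixP (j + 1) (by omega), hr, hrf1 (j + 1) (by omega)]
        have e2 : (π'.trans r) (f j) = f (m - j) := by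
          rw [Equiv.trans_apply, hfixP j (by omega), hr, hrf1 j (by omega)]
        rw [e1, e2]
        refine ⟨hmem _ (by omega), ?_⟩
        rw [← hfsucc]
        congr 1
        omega
      · have hiD' : i ∈ D' := Finset.mem_sdiff.mpr ⟨hi, hiP⟩
        obtain ⟨h2a, h2b⟩ := c2 i hiD'
        have e1 : (π'.trans r) (G i) = π' (G i) := by
          rw [Equiv.trans_apply, hrfixD' _ h2a]
        have e2 : (π'.trans r) i = π' i := by
          rw [Equiv.trans_apply, hrfixGD' _ (c1 i hiD')]
        rw [e1, e2]
        exact ⟨hD'sub h2a, h2b⟩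
    · intro x hxD hxG
      have hx1 : x ∉ D' := fun h => hxD (hD'sub h)
      have hx2 : x ∉ D'.image G := fun h => hxG (Finset.image_subset_image hD'sub h)
      rw [Equiv.trans_apply, c3 x hx1 hx2, hr]
      apply hrf2
      intro j hj heq
      rcases Nat.lt_or_ge j m with h | h
      · exact hxD (heq ▸ hmem j h)
      · have : j = m := by omega
        subst this
        refine hxG (Finset.mem_image.mpr ⟨f (m - 1), hmem _ (by omega), ?_⟩)
        rw [← heq]
        exact (hfsucc _).symm.trans (by congr 1; omega)
  · -- "cycle" case: `G` restricts to a permutation of `D`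
    push_neg at h1
    have hDE : D = D.image G := by
      apply Finset.eq_of_subset_of_card_le (fun x hx => h1 x hx)
      exact le_of_eq (Finset.card_image_of_injOn hG)
    have hGmem : ∀ i ∈ D, G i ∈ D := by
      intro i hi; rw [hDE]; exact Finset.mem_image_of_mem G hi
    have hbij : Function.Bijective
        (fun x : {x // x ∈ D} => (⟨G x.1, hGmem x.1 x.2⟩ : {x // x ∈ D})) := by
      apply Finite.injective_iff_bijective.mp
      intro a b hab
      exact Subtype.ext
        (hG (Finset.mem_coe.mpr a.2) (Finset.mem_coe.mpr b.2) (congrArg Subtype.val hab))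
    set e := Equiv.ofBijective _ hbij with hedef
    have hconj : IsConj e e⁻¹ := by
      rw [Equiv.Perm.isConj_iff_cycleType_eq, Equiv.Perm.cycleType_inv]
    obtain ⟨c, hc⟩ := isConj_iff.mp hconj
    have hsemi : ∀ x, c (e x) = e⁻¹ (c x) := by
      intro x
      have h := congrArg (fun g : Equiv.Perm {x // x ∈ D} => g x) (mul_inv_eq_iff_eq_mul.mp hc)
      simpa [Equiv.Perm.mul_apply] using h
    set π := Equiv.Perm.extendDomain c (Equiv.refl {x // x ∈ D}) with hπdef
    have hπ1 : ∀ (x) (hx : x ∈ D), π x = ((c ⟨x, hx⟩ : {x // x ∈ D}) : I) := by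
      intro x hx
      rw [hπdef, Equiv.Perm.extendDomain_apply_subtype _ _ hx]
      rfl
    have hπ2 : ∀ x, x ∉ D → π x = x := fun x hx =>
      Equiv.Perm.extendDomain_apply_not_subtype _ _ hx
    refine ⟨π, ?_, ?_, ?_⟩
    · intro i hi
      rw [hπ1 i hi, ← hDE]
      exact (c ⟨i, hi⟩).2
    · intro i hi
      have hGi := hGmem i hi
      have he1 : π (G i) = ((e⁻¹ (c ⟨i, hi⟩) : {x // x ∈ D}) : I) := by
        rw [hπ1 _ hGi]
        have heq : (⟨G i, hGi⟩ : {x // x ∈ D}) = e ⟨i, hi⟩ := rfl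
        rw [heq, hsemi]
      constructor
      · rw [he1]; exact (e⁻¹ (c ⟨i, hi⟩)).2
      · rw [he1, hπ1 i hi]
        have heq : G ((e⁻¹ (c ⟨i, hi⟩) : {x // x ∈ D}) : I)
            = ((e (e⁻¹ (c ⟨i, hi⟩)) : {x // x ∈ D}) : I) := rfl
        rw [heq, ← Equiv.Perm.mul_apply, mul_inv_cancel, Equiv.Perm.one_apply]
    · intro x hx _
      exact hπ2 x hx
/-- For every pair of injections `σ, τ : [k] ↪ [n]` there is a group element
`g = (π, ρ) ∈ S_k × S_n` with `g·σ = τ` and `g·τ = σ`. -/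
theorem stmt_1 (k n : ℕ) (hkn : k ≤ n) (σ τ : Fin k ↪ Fin n) :
    ∃ (π : Equiv.Perm (Fin k)) (ρ : Equiv.Perm (Fin n)),
      injAct π ρ σ = τ ∧ injAct π ρ τ = σ := by
  classical
  set D : Finset (Fin k) := Finset.univ.filter (fun i => ∃ j, τ j = σ i) with hDdef
  set G : Fin k → Fin k := fun i => if h : ∃ j, τ j = σ i then h.choose else i with hGdef
  have hmemD : ∀ i, i ∈ D ↔ ∃ j, τ j = σ i := by
    intro i; rw [hDdef]; simp
  have hGspec : ∀ i ∈ D, τ (G i) = σ i := by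
    intro i hi
    rw [hmemD] at hi
    simp only [hGdef]
    rw [dif_pos hi]
    exact hi.choose_spec
  have hInj : Set.InjOn G ↑D := by
    intro a ha b hb hab
    have h : σ a = σ b := by
      rw [← hGspec a (Finset.mem_coe.mp ha), ← hGspec b (Finset.mem_coe.mp hb), hab]
    exact σ.injective h
  obtain ⟨π, c1, c2, c3⟩ := lemP G D hInj
  have hmemE : ∀ j, j ∈ D.image G ↔ ∃ i, σ i = τ j := by
    intro j
    constructor
    · intro h
      obtain ⟨i, hi, rfl⟩ := Finset.mem_image.mp h
      exact ⟨i, (hGspec i hi).symm⟩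
    · rintro ⟨i, hi⟩
      have hiD : i ∈ D := (hmemD i).mpr ⟨j, hi.symm⟩
      have : G i = j := τ.injective (by rw [hGspec i hiD, ← hi])
      exact Finset.mem_image.mpr ⟨i, hiD, this⟩
  have hcard : (D.image G).card = D.card := Finset.card_image_of_injOn hInj
  have himg : (D.image G).image ⇑π = D := by
    apply Finset.eq_of_subset_of_card_le
    · intro x hx
      obtain ⟨y, hy, rfl⟩ := Finset.mem_image.mp hx
      obtain ⟨i, hi, rfl⟩ := Finset.mem_image.mp hy
      exact (c2 i hi).1
    · rw [Finset.card_image_of_injective _ π.injective, hcard]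
  have hED : ∀ x, π x ∈ D → x ∈ D.image G := by
    intro x hx
    rw [← himg] at hx
    obtain ⟨y, hy, hyx⟩ := Finset.mem_image.mp hx
    rwa [← π.injective hyx]
  set ρf : Fin n → Fin n := fun x =>
    if hx : ∃ i, σ i = x then τ (π hx.choose)
    else if hx' : ∃ j, τ j = x then σ (π hx'.choose) else x with hρfdef
  have hρσ : ∀ i, ρf (σ i) = τ (π i) := by
    intro i
    simp only [hρfdef]
    rw [dif_pos ⟨i, rfl⟩]
    exact congrArg (fun t => τ (π t))
      (σ.injective (Exists.choose_spec (⟨i, rfl⟩ : ∃ i', σ i' = σ i)))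
  have hρid : ∀ x, ¬(∃ i, σ i = x) → ¬(∃ j, τ j = x) → ρf x = x := by
    intro x hx hx'
    simp only [hρfdef]
    rw [dif_neg hx, dif_neg hx']
  have hρτ : ∀ j, ρf (τ j) = σ (π j) := by
    intro j
    by_cases hx : ∃ i, σ i = τ j
    · obtain ⟨i, hi⟩ := hx
      rw [← hi, hρσ]
      have hiD : i ∈ D := (hmemD i).mpr ⟨j, hi.symm⟩
      have hji : G i = j := τ.injective (by rw [hGspec i hiD, ← hi])
      obtain ⟨h2a, h2b⟩ := c2 i hiD
      rw [← hji, ← hGspec _ h2a, h2b]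
    · simp only [hρfdef]
      rw [dif_neg hx, dif_pos ⟨j, rfl⟩]
      exact congrArg (fun t => σ (π t))
        (τ.injective (Exists.choose_spec (⟨j, rfl⟩ : ∃ j', τ j' = τ j)))
  have keyσ : ∀ x y, ρf x = ρf y → (∃ i, σ i = x) → x = y := by
    intro x y hxy hx
    obtain ⟨i, rfl⟩ := hx
    by_cases hy : ∃ i', σ i' = y
    · obtain ⟨i', rfl⟩ := hy
      rw [hρσ, hρσ] at hxy
      exact congrArg σ (π.injective (τ.injective hxy))
    · by_cases hy' : ∃ j, τ j = y
      · obtain ⟨j, rfl⟩ := hy'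
        rw [hρσ, hρτ] at hxy
        exfalso
        have hπjD : π j ∈ D := (hmemD (π j)).mpr ⟨π i, hxy⟩
        obtain ⟨i0, hi0, hGi0⟩ := Finset.mem_image.mp (hED j hπjD)
        exact hy ⟨i0, by rw [← hGspec i0 hi0, hGi0]⟩
      · rw [hρσ, hρid y hy hy'] at hxy
        exact absurd ⟨π i, hxy⟩ hy'
  have keyτ : ∀ x y, ρf x = ρf y → (∃ j, τ j = x) → x = y := by
    intro x y hxy hx
    by_cases hxσ : ∃ i, σ i = x
    · exact keyσ x y hxy hxσ
    · obtain ⟨j, rfl⟩ := hx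
      by_cases hyσ : ∃ i, σ i = y
      · exact (keyσ y _ hxy.symm hyσ).symm
      · by_cases hy' : ∃ j', τ j' = y
        · obtain ⟨j', rfl⟩ := hy'
          rw [hρτ, hρτ] at hxy
          exact congrArg τ (π.injective (σ.injective hxy))
        · rw [hρτ, hρid y hyσ hy'] at hxy
          exact absurd ⟨π j, hxy⟩ hyσ
  have hinj : Function.Injective ρf := by
    intro x y hxy
    by_cases hx : ∃ i, σ i = x
    · exact keyσ x y hxy hx
    · by_cases hx' : ∃ j, τ j = x
      · exact keyτ x y hxy hx'
      · by_cases hy : ∃ i, σ i = y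
        · exact (keyσ y x hxy.symm hy).symm
        · by_cases hy' : ∃ j, τ j = y
          · exact (keyτ y x hxy.symm hy').symm
          · rw [hρid x hx hx', hρid y hy hy'] at hxy; exact hxy
  have hbij : Function.Bijective ρf := Finite.injective_iff_bijective.mp hinj
  refine ⟨π, Equiv.ofBijective ρf hbij, ?_, ?_⟩
  · apply DFunLike.ext
    intro i
    show ρf (σ (π.symm i)) = τ i
    rw [hρσ, Equiv.apply_symm_apply]
  · apply DFunLike.ext
    intro i
    show ρf (τ (π.symm i)) = σ i
    rw [hρτ, Equiv.apply_symm_apply]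
end

section
/- Let μ ⊢ k and λ ⊢ n with λ/μ a horizontal strip, and let (s, t) be the canonical pair of standard Young tableaux for (μ, λ). Then Σ_{π ∈ C_s} Σ_{π' ∈ C_t} sgn(π)·sgn(π')·1[({πs},{π't}) covers the identity injection] = |C_s| = (μ^⊤)!, where (μ^⊤)! = ∏_j (μ^⊤_j)! and μ^⊤ is the conjugate partition of μ. In particular this signed sum is nonzero. -/
open scoped Classical

/-- The sequence of parts of a partition of `m`, in weakly decreasing order, indexed from 0
(and equal to `0` beyond the last part): `partFun p i` is the `(i+1)`-st largest part. -/
noncomputable def partFun {m : ℕ} (p : Nat.Partition m) (i : ℕ) : ℕ :=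
  sSup {a | i < Multiset.card (p.parts.filter (fun x => a ≤ x))}

/-- `lam/mu` is a horizontal strip: `mu i ≤ lam i` for all rows `i`, and no column contains
two cells of `lam/mu` (equivalently `lam (i+1) ≤ mu i`). -/
def IsHorizStrip (mu lam : ℕ → ℕ) : Prop :=
  ∀ i, mu i ≤ lam i ∧ lam (i + 1) ≤ mu i

/-- The height of column `j` of the Young diagram with row lengths `mu` (for `mu` weakly
decreasing this is `#{i : mu i > j}`), i.e. the `j`-th part of the conjugate partition. -/
noncomputable def colHeight (mu : ℕ → ℕ) (j : ℕ) : ℕ :=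
  sInf {i | mu i ≤ j}

/-- The row of the (0-indexed) value `v` in the canonical standard Young tableau of shape
`mu`, obtained by inserting `0, 1, …` into the rows from left to right, top to bottom. -/
noncomputable def canonRow (mu : ℕ → ℕ) (v : ℕ) : ℕ :=
  sInf {i | v < ∑ a ∈ Finset.range (i + 1), mu a}

/-- The column of the (0-indexed) value `v` in the canonical standard Young tableau of
shape `mu`. -/
noncomputable def canonCol (mu : ℕ → ℕ) (v : ℕ) : ℕ :=
  v - ∑ a ∈ Finset.range (canonRow mu v), mu a

/-- The canonical standard Young tableau `s` of shape `mu ⊢ k`, encoded by the position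
`(row, column)` of each of the values `0, …, k-1` (0-indexed). -/
noncomputable def canonPosS (mu : ℕ → ℕ) (k : ℕ) : Fin k → ℕ × ℕ :=
  fun v => (canonRow mu (v : ℕ), canonCol mu (v : ℕ))

/-- The (sorted, increasing) list of indices of the columns containing a cell of the
horizontal strip `lam/mu`. -/
noncomputable def stripCols (mu lam : ℕ → ℕ) : List ℕ :=
  ((Finset.range (lam 0)).filter (fun j => colHeight mu j < colHeight lam j)).sort (· ≤ ·)

/-- The canonical standard Young tableau `t` of shape `lam ⊢ n`, obtained from the canonical
tableau `s` of shape `mu ⊢ k` by filling the cells of the horizontal strip `lam/mu` with the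
values `k, …, n-1` (0-indexed) from left to right; encoded by the position of each value. -/
noncomputable def canonPosT (mu lam : ℕ → ℕ) (k n : ℕ) : Fin n → ℕ × ℕ :=
  fun v =>
    if (v : ℕ) < k then (canonRow mu (v : ℕ), canonCol mu (v : ℕ))
    else
      let j := (stripCols mu lam).getD ((v : ℕ) - k) 0
      (colHeight mu j, j)

/-- The column stabilizer `C_u` of a Young tableau `u` encoded by its position function
`pos`: the permutations of the values preserving each column setwise. -/
noncomputable def CStab {m : ℕ} (pos : Fin m → ℕ × ℕ) : Finset (Equiv.Perm (Fin m)) :=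
  Finset.univ.filter fun π => ∀ v, (pos (π v)).2 = (pos v).2

/-- The pair of tabloids `({πs}, {π't})` covers the injection `σ`, where `s, t` are Young
tableaux with position functions `posS, posT` and `π, π'` relabel their values: the value
`i` occupies the cell `posS (π⁻¹ i)` of `πs`, so the condition
`row_{πs}(i) = row_{π't}(σ i)` reads `(posS (π⁻¹ i)).1 = (posT (π'⁻¹ (σ i))).1`. -/
def coversPerm {k n : ℕ} (posS : Fin k → ℕ × ℕ) (posT : Fin n → ℕ × ℕ)
    (π : Equiv.Perm (Fin k)) (π' : Equiv.Perm (Fin n)) (σ : Fin k ↪ Fin n) : Prop :=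
  ∀ i, (posS (π⁻¹ i)).1 = (posT (π'⁻¹ (σ i))).1

/-- The identity injection `[k] ↪ [n]`. -/
def idInj {k n : ℕ} (hkn : k ≤ n) : Fin k ↪ Fin n :=
  ⟨Fin.castLE hkn, Fin.castLE_injective hkn⟩

/-! For `π ∈ C_s`, the only `π' ∈ C_t` such that `({πs}, {π't})` covers the identity is the
extension of `π` by the identity on the strip values `k, …, n-1`. Indeed, covering and column
stabilization force `π'⁻¹ i` to occupy in `t` the cell that `π⁻¹ i` occupies in `s`, for `i < k`;
so `π'` permutes the strip values among themselves while preserving columns, and the cells of a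
horizontal strip lie in pairwise distinct columns. The inner sum is therefore `sgn(π)² = 1`.
Finally `C_s` is the product of the symmetric groups of the columns of `s`, of order
`∏_j (μ^⊤_j)!`. -/

open Finset

theorem Multiset.sum_map_eq_sum_range_card_filter_lt {ι : Type*} (P : Multiset ι) (f : ι → ℕ)
    {N : ℕ} (hf : ∀ x ∈ P, f x ≤ N) :
    (P.map f).sum = ∑ j ∈ Finset.range N, Multiset.card (P.filter (fun x => j < f x)) := by
  induction P using Multiset.induction with
  | empty => simp
  | cons x P ih =>
    have hx : f x ≤ N := hf x (Multiset.mem_cons_self x P)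
    rw [Multiset.map_cons, Multiset.sum_cons, ih fun y hy => hf y (Multiset.mem_cons_of_mem hy)]
    simp only [Multiset.filter_cons, Multiset.card_add, sum_add_distrib, apply_ite Multiset.card,
      Multiset.card_singleton, Multiset.card_zero, sum_boole, Nat.cast_id]
    rw [show (Finset.range N).filter (· < f x) = Finset.range (f x) by ext; simp; omega,
      Finset.card_range, add_comm]

theorem Finset.sum_eq_sum_range_card_filter_lt {ι : Type*} (s : Finset ι) (f : ι → ℕ)
    {N : ℕ} (hf : ∀ x ∈ s, f x ≤ N) :
    ∑ x ∈ s, f x = ∑ j ∈ range N, #(s.filter (fun x => j < f x)) :=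
  s.val.sum_map_eq_sum_range_card_filter_lt f hf

/-- `f` lists the row lengths of a Young diagram with `K` cells. -/
structure IsYoungShape (f : ℕ → ℕ) (K : ℕ) : Prop where
  antitone : Antitone f
  eq_zero : ∀ i, K ≤ i → f i = 0
  sum_range : ∑ i ∈ range K, f i = K

namespace Nat.Partition

variable {m : ℕ} (p : Nat.Partition m)

theorem card_parts_le : Multiset.card p.parts ≤ m := by
  calc Multiset.card p.parts = (p.parts.map fun _ => 1).sum := by simp
    _ ≤ (p.parts.map id).sum := Multiset.sum_map_le_sum_map _ _ fun x hx => p.parts_pos hx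
    _ = m := by rw [Multiset.map_id, p.parts_sum]

theorem le_partFun_iff {i a : ℕ} (ha : 0 < a) :
    a ≤ partFun p i ↔ i < Multiset.card (p.parts.filter (a ≤ ·)) := by
  have hbdd : BddAbove {a | i < Multiset.card (p.parts.filter (a ≤ ·))} := by
    refine ⟨m, fun b hb => ?_⟩
    obtain ⟨x, hx⟩ := Multiset.card_pos_iff_exists_mem.1 (Nat.zero_lt_of_lt hb)
    rw [Multiset.mem_filter] at hx
    exact hx.2.trans (le_of_mem_parts hx.1)
  refine ⟨fun h => ?_, fun h => le_csSup hbdd h⟩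
  have hne : {a | i < Multiset.card (p.parts.filter (a ≤ ·))}.Nonempty :=
    Set.nonempty_iff_ne_empty.2 fun he => by simp [partFun, he] at h; omega
  refine (Nat.sSup_mem hne hbdd).trans_le (Multiset.card_le_card ?_)
  exact Multiset.monotone_filter_right _ fun x hx => h.trans hx

theorem partFun_le (i : ℕ) : partFun p i ≤ m := by
  by_contra! h
  obtain ⟨x, hx⟩ := Multiset.card_pos_iff_exists_mem.1
    (Nat.zero_lt_of_lt ((p.le_partFun_iff m.succ_pos).1 h))
  rw [Multiset.mem_filter] at hx
  exact absurd (le_of_mem_parts hx.1) (by omega)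

theorem partFun_antitone : Antitone (partFun p) := by
  intro i j hij
  rcases Nat.eq_zero_or_pos (partFun p j) with h | h
  · simp [h]
  · exact (p.le_partFun_iff h).2 (hij.trans_lt ((p.le_partFun_iff h).1 le_rfl))

theorem partFun_eq_zero {i : ℕ} (hi : m ≤ i) : partFun p i = 0 := by
  by_contra! h
  have := ((p.le_partFun_iff (Nat.pos_of_ne_zero h)).1 le_rfl).trans_le
    ((Multiset.card_le_card (Multiset.filter_le _ _)).trans p.card_parts_le)
  omega

theorem sum_range_partFun : ∑ i ∈ range m, partFun p i = m := by
  calc ∑ i ∈ range m, partFun p i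
      = ∑ j ∈ range m, #((range m).filter (fun i => j < partFun p i)) :=
        sum_eq_sum_range_card_filter_lt _ _ fun i _ => p.partFun_le i
    _ = ∑ j ∈ range m, Multiset.card (p.parts.filter (fun x => j < x)) := by
        refine sum_congr rfl fun j _ => ?_
        have hcard :=
          (Multiset.card_le_card (Multiset.filter_le (fun x => j < x) _)).trans p.card_parts_le
        rw [← card_range (Multiset.card _)]
        congr 1; ext i
        rw [mem_filter, mem_range, mem_range]
        exact ⟨fun h => (p.le_partFun_iff j.succ_pos).1 h.2,
          fun h => ⟨h.trans_le hcard, (p.le_partFun_iff j.succ_pos).2 h⟩⟩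
    _ = m := by
        rw [← Multiset.sum_map_eq_sum_range_card_filter_lt _ _ fun x hx => le_of_mem_parts hx,
          Multiset.map_id', p.parts_sum]

theorem isYoungShape_partFun : IsYoungShape (partFun p) m :=
  ⟨p.partFun_antitone, fun _ => p.partFun_eq_zero, p.sum_range_partFun⟩

end Nat.Partition

theorem Nat.lt_sInf_iff_not {P : ℕ → Prop} (hP : Monotone P) (h : ∃ i, P i) {r : ℕ} :
    r < sInf {i | P i} ↔ ¬ P r :=
  ⟨Nat.notMem_of_lt_sInf, fun hr => lt_of_not_ge fun hle => hr (hP hle (Nat.sInf_mem h))⟩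

theorem mem_CStab_iff {m : ℕ} {pos : Fin m → ℕ × ℕ} {π : Equiv.Perm (Fin m)} :
    π ∈ CStab pos ↔ ∀ v, (pos (π v)).2 = (pos v).2 := by
  simp [CStab]

namespace IsYoungShape

variable {f : ℕ → ℕ} {K : ℕ} (hf : IsYoungShape f K)
include hf

theorem sum_range_le (N : ℕ) : ∑ i ∈ range N, f i ≤ K := by
  rcases le_total N K with h | h
  · exact hf.sum_range ▸ sum_le_sum_of_subset (range_subset_range.2 h)
  · rw [← sum_range_add_sum_Ico _ h, hf.sum_range,
      sum_eq_zero fun i hi => hf.eq_zero i (mem_Ico.1 hi).1, add_zero]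

theorem lt_colHeight_iff {j r : ℕ} : r < colHeight f j ↔ j < f r := by
  rw [colHeight, Nat.lt_sInf_iff_not (fun a b hab ha => (hf.antitone hab).trans ha)
    ⟨K, by simp [hf.eq_zero K le_rfl]⟩, not_le]

theorem colHeight_le (j : ℕ) : colHeight f j ≤ K :=
  Nat.sInf_le (by simp [hf.eq_zero K le_rfl])

omit hf in
theorem canonRow_add {r c : ℕ} (hc : c < f r) : canonRow f (∑ i ∈ range r, f i + c) = r := by
  have hr : ∑ i ∈ range r, f i + c < ∑ i ∈ range (r + 1), f i := by
    rw [sum_range_succ]; omega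
  refine le_antisymm (Nat.sInf_le hr) (le_csInf ⟨r, hr⟩ fun i hi => ?_)
  by_contra! hlt
  have := sum_le_sum_of_subset (f := f) (range_subset_range.2 (by omega : i + 1 ≤ r))
  rw [Set.mem_ofPred_eq] at hi
  omega

omit hf in
theorem canonCol_add {r c : ℕ} (hc : c < f r) : canonCol f (∑ i ∈ range r, f i + c) = c := by
  rw [canonCol, canonRow_add hc, Nat.add_sub_cancel_left]

theorem sum_range_canonRow_le_and_lt {v : ℕ} (hv : v < K) :
    ∑ i ∈ range (canonRow f v), f i ≤ v ∧ v < ∑ i ∈ range (canonRow f v + 1), f i := by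
  have hne : ∃ i, v < ∑ a ∈ range (i + 1), f a := by
    refine ⟨K, hv.trans_le ?_⟩
    calc K = ∑ a ∈ range K, f a := hf.sum_range.symm
      _ ≤ ∑ a ∈ range (K + 1), f a := sum_le_sum_of_subset (range_subset_range.2 K.le_succ)
  refine ⟨?_, Nat.sInf_mem hne⟩
  rcases Nat.eq_zero_or_pos (canonRow f v) with h | h
  · simp [h]
  · have hprev : ¬ v < ∑ a ∈ range (canonRow f v - 1 + 1), f a :=
      Nat.notMem_of_lt_sInf (s := {i | v < ∑ a ∈ range (i + 1), f a}) (Nat.sub_one_lt h.ne')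
    rw [Nat.sub_add_cancel h] at hprev
    omega

theorem canonCol_lt {v : ℕ} (hv : v < K) : canonCol f v < f (canonRow f v) := by
  have := hf.sum_range_canonRow_le_and_lt hv
  rw [sum_range_succ] at this
  rw [canonCol]; omega

theorem sum_range_canonRow_add_canonCol {v : ℕ} (hv : v < K) :
    ∑ i ∈ range (canonRow f v), f i + canonCol f v = v := by
  have := (hf.sum_range_canonRow_le_and_lt hv).1
  rw [canonCol]; omega

theorem canonRow_lt_colHeight {v : ℕ} (hv : v < K) :
    canonRow f v < colHeight f (canonCol f v) :=
  hf.lt_colHeight_iff.2 (hf.canonCol_lt hv)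

theorem canonPosS_injective : Function.Injective (canonPosS f K) := by
  intro v w h
  simp only [canonPosS, Prod.mk.injEq] at h
  rw [Fin.ext_iff, ← hf.sum_range_canonRow_add_canonCol v.isLt,
    ← hf.sum_range_canonRow_add_canonCol w.isLt, h.1, h.2]

theorem card_filter_canonCol_eq (j : ℕ) :
    #(univ.filter fun v : Fin K => canonCol f v = j) = colHeight f j := by
  rw [← card_range (colHeight f j)]
  refine card_nbij (fun v => canonRow f v) (fun v hv => ?_) (fun v hv w hw h => ?_) ?_
  · rw [mem_coe, mem_filter] at hv
    simpa [← hv.2] using hf.canonRow_lt_colHeight v.isLt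
  · rw [mem_coe, mem_filter] at hv hw
    exact hf.canonPosS_injective (Prod.ext h (hv.2.trans hw.2.symm))
  · intro r hr
    have hc : j < f r := hf.lt_colHeight_iff.1 (by simpa using hr)
    have hlt : ∑ i ∈ range r, f i + j < K := by
      have := hf.sum_range_le (r + 1)
      rw [sum_range_succ] at this; omega
    exact ⟨⟨_, hlt⟩, by simp [canonCol_add hc], canonRow_add hc⟩

theorem card_CStab_canonPosS :
    #(CStab (canonPosS f K)) = ∏ j ∈ range K, (colHeight f j).factorial := by
  let col : Fin K → Fin K := fun v => ⟨canonCol f v, (Nat.sub_le _ _).trans_lt v.isLt⟩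
  have hCStab :
      #(CStab (canonPosS f K)) = Fintype.card {g : Equiv.Perm (Fin K) // col ∘ g = col} := by
    rw [Fintype.card_subtype]
    congr 1; ext g
    simp [mem_CStab_iff, canonPosS, funext_iff, col, Fin.ext_iff]
  rw [hCStab, DomMulAct.stabilizer_card, ← Fin.prod_univ_eq_prod_range]
  refine prod_congr rfl fun j _ => ?_
  rw [Fintype.card_subtype, ← hf.card_filter_canonCol_eq]
  simp [col, Fin.ext_iff]

theorem sum_range_colHeight {N : ℕ} (hN : ∀ r, f r ≤ N) :
    ∑ j ∈ range N, colHeight f j = K := by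
  calc ∑ j ∈ range N, colHeight f j
      = ∑ j ∈ range N, #((range K).filter (fun r => j < f r)) := by
        refine sum_congr rfl fun j _ => ?_
        rw [← card_range (colHeight f j)]
        congr 1; ext r
        simp only [mem_filter, mem_range, ← hf.lt_colHeight_iff]
        exact ⟨fun h => ⟨h.trans_le (hf.colHeight_le j), h⟩, fun h => h.2⟩
    _ = K := by rw [← sum_eq_sum_range_card_filter_lt _ _ fun r _ => hN r, hf.sum_range]

end IsYoungShape

section HorizontalStrip

variable {mu lam : ℕ → ℕ} {k n : ℕ}

theorem colHeight_le_colHeight (hmu : IsYoungShape mu k) (hlam : IsYoungShape lam n)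
    (hle : ∀ i, mu i ≤ lam i) (j : ℕ) : colHeight mu j ≤ colHeight lam j :=
  le_of_forall_lt fun r hr =>
    hlam.lt_colHeight_iff.2 ((hmu.lt_colHeight_iff.1 hr).trans_le (hle r))

theorem colHeight_le_colHeight_add_one (hmu : IsYoungShape mu k) (hlam : IsYoungShape lam n)
    (hle : ∀ i, lam (i + 1) ≤ mu i) (j : ℕ) : colHeight lam j ≤ colHeight mu j + 1 := by
  refine le_of_forall_lt fun r hr => ?_
  rcases r with _ | r
  · exact Nat.succ_pos _
  · exact Nat.succ_lt_succ
      (hmu.lt_colHeight_iff.2 ((hlam.lt_colHeight_iff.1 hr).trans_le (hle r)))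

variable (hmu : IsYoungShape mu k) (hlam : IsYoungShape lam n) (hstrip : IsHorizStrip mu lam)
include hmu hlam hstrip

theorem length_stripCols : (stripCols mu lam).length = n - k := by
  have hcol : ∀ j, colHeight lam j =
      colHeight mu j + if colHeight mu j < colHeight lam j then 1 else 0 := fun j => by
    have := colHeight_le_colHeight hmu hlam (fun i => (hstrip i).1) j
    have := colHeight_le_colHeight_add_one hmu hlam (fun i => (hstrip i).2) j
    split <;> omega
  have hn := hlam.sum_range_colHeight fun r => hlam.antitone r.zero_le
  have hk := hmu.sum_range_colHeight fun r => (hstrip r).1.trans (hlam.antitone r.zero_le)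
  rw [sum_congr rfl fun j _ => hcol j, sum_add_distrib, hk, sum_boole, Nat.cast_id] at hn
  rw [stripCols, length_sort]
  omega

theorem eq_of_stripCols_getD_eq {v w : ℕ} (hv : v < n - k) (hw : w < n - k)
    (h : (stripCols mu lam).getD v 0 = (stripCols mu lam).getD w 0) : v = w := by
  have hlen := length_stripCols hmu hlam hstrip
  rw [List.getD_eq_getElem _ _ (by omega), List.getD_eq_getElem _ _ (by omega)] at h
  exact (sort_nodup _ _).getElem_inj_iff.1 h

end HorizontalStrip

section CanonicalPair

variable {mu lam : ℕ → ℕ} {k n : ℕ}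

theorem canonPosT_idInj (hkn : k ≤ n) (i : Fin k) :
    canonPosT mu lam k n (idInj hkn i) = canonPosS mu k i := by
  simp [canonPosT, canonPosS, idInj]

theorem canonPosT_of_le {v : Fin n} (hv : k ≤ v) :
    canonPosT mu lam k n v =
      (colHeight mu ((stripCols mu lam).getD (v - k) 0), (stripCols mu lam).getD (v - k) 0) := by
  simp [canonPosT, hv.not_gt]

theorem mem_range_idInj_iff (hkn : k ≤ n) {v : Fin n} :
    v ∈ Set.range (idInj hkn) ↔ (v : ℕ) < k :=
  ⟨fun ⟨i, hi⟩ => hi ▸ i.isLt, fun hv => ⟨⟨v, hv⟩, rfl⟩⟩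

theorem canonPosT_injective (hmu : IsYoungShape mu k) (hlam : IsYoungShape lam n)
    (hkn : k ≤ n) (hstrip : IsHorizStrip mu lam) : Function.Injective (canonPosT mu lam k n) := by
  have hbelow : ∀ i : Fin k, ∀ v : Fin n, k ≤ (v : ℕ) →
      canonPosT mu lam k n (idInj hkn i) ≠ canonPosT mu lam k n v := fun i v hv h => by
    rw [canonPosT_idInj, canonPosT_of_le hv, canonPosS, Prod.mk.injEq] at h
    have := hmu.canonRow_lt_colHeight i.isLt
    rw [h.1, h.2] at this
    exact lt_irrefl _ this
  intro v w h
  rcases lt_or_ge (v : ℕ) k with hv | hv <;> rcases lt_or_ge (w : ℕ) k with hw | hw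
  · obtain ⟨i, rfl⟩ := (mem_range_idInj_iff hkn).2 hv
    obtain ⟨j, rfl⟩ := (mem_range_idInj_iff hkn).2 hw
    rw [canonPosT_idInj, canonPosT_idInj] at h
    rw [hmu.canonPosS_injective h]
  · obtain ⟨i, rfl⟩ := (mem_range_idInj_iff hkn).2 hv
    exact absurd h (hbelow i w hw)
  · obtain ⟨j, rfl⟩ := (mem_range_idInj_iff hkn).2 hw
    exact absurd h.symm (hbelow j v hv)
  · rw [canonPosT_of_le hv, canonPosT_of_le hw, Prod.mk.injEq] at h
    have := eq_of_stripCols_getD_eq hmu hlam hstrip (v := v - k) (w := w - k)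
      (by omega) (by omega) h.2
    exact Fin.ext (by omega)

end CanonicalPair

theorem inv_mem_CStab {m : ℕ} {pos : Fin m → ℕ × ℕ} {π : Equiv.Perm (Fin m)}
    (hπ : π ∈ CStab pos) : π⁻¹ ∈ CStab pos :=
  mem_CStab_iff.2 fun v => by simpa using (mem_CStab_iff.1 hπ (π⁻¹ v)).symm

theorem Equiv.Perm.viaFintypeEmbedding_inv_apply_image {α β : Type*} [Fintype α] [DecidableEq β]
    (e : Equiv.Perm α) (f : α ↪ β) (a : α) :
    (e.viaFintypeEmbedding f)⁻¹ (f a) = f (e⁻¹ a) := by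
  rw [inv_eq_iff_eq, viaFintypeEmbedding_apply_image]
  simp

section Extension

open Equiv.Perm

variable {mu lam : ℕ → ℕ} {k n : ℕ} (hkn : k ≤ n)

theorem viaFintypeEmbedding_idInj_mem_CStab {π : Equiv.Perm (Fin k)}
    (hπ : π ∈ CStab (canonPosS mu k)) :
    π.viaFintypeEmbedding (idInj hkn) ∈ CStab (canonPosT mu lam k n) := by
  refine mem_CStab_iff.2 fun v => ?_
  by_cases hv : v ∈ Set.range (idInj hkn)
  · obtain ⟨i, rfl⟩ := hv
    rw [viaFintypeEmbedding_apply_image, canonPosT_idInj, canonPosT_idInj]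
    exact mem_CStab_iff.1 hπ i
  · rw [viaFintypeEmbedding_apply_notMem_range _ _ hv]

theorem coversPerm_viaFintypeEmbedding_idInj (π : Equiv.Perm (Fin k)) :
    coversPerm (canonPosS mu k) (canonPosT mu lam k n) π (π.viaFintypeEmbedding (idInj hkn))
      (idInj hkn) := fun i => by
  rw [viaFintypeEmbedding_inv_apply_image, canonPosT_idInj]

theorem eq_viaFintypeEmbedding_idInj_of_coversPerm (hmu : IsYoungShape mu k)
    (hlam : IsYoungShape lam n) (hstrip : IsHorizStrip mu lam)
    {π : Equiv.Perm (Fin k)} {π' : Equiv.Perm (Fin n)} (hπ : π ∈ CStab (canonPosS mu k))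
    (hπ' : π' ∈ CStab (canonPosT mu lam k n))
    (hcov : coversPerm (canonPosS mu k) (canonPosT mu lam k n) π π' (idInj hkn)) :
    π' = π.viaFintypeEmbedding (idInj hkn) := by
  have hinj := canonPosT_injective hmu hlam hkn hstrip
  have hcol := mem_CStab_iff.1 (inv_mem_CStab hπ')
  have hS : ∀ i, π'⁻¹ (idInj hkn i) = idInj hkn (π⁻¹ i) := fun i => hinj <| by
    rw [canonPosT_idInj]
    refine Prod.ext (hcov i).symm ?_
    rw [hcol, canonPosT_idInj]
    exact (mem_CStab_iff.1 (inv_mem_CStab hπ) i).symm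
  rw [← inv_inj]
  ext v
  by_cases hv : v ∈ Set.range (idInj hkn)
  · obtain ⟨i, rfl⟩ := hv
    rw [hS, viaFintypeEmbedding_inv_apply_image]
  · -- `π'⁻¹` preserves `range (idInj hkn)`, hence also its complement, the strip values.
    have hw : π'⁻¹ v ∉ Set.range (idInj hkn) := by
      rintro ⟨i, hi⟩
      refine hv ⟨π i, π'⁻¹.injective ?_⟩
      simpa [hS] using hi
    rw [inv_eq_iff_eq.2 (viaFintypeEmbedding_apply_notMem_range _ _ hv).symm]
    rw [mem_range_idInj_iff, not_lt] at hv hw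
    have hsame := hcol v
    rw [canonPosT_of_le hv, canonPosT_of_le hw] at hsame
    have := eq_of_stripCols_getD_eq hmu hlam hstrip (by omega) (by omega) hsame
    omega

theorem sum_sign_mul_sign_mul_ite_coversPerm_eq_one (hmu : IsYoungShape mu k)
    (hlam : IsYoungShape lam n) (hstrip : IsHorizStrip mu lam)
    {π : Equiv.Perm (Fin k)} (hπ : π ∈ CStab (canonPosS mu k)) :
    ∑ π' ∈ CStab (canonPosT mu lam k n), (sign π : ℤ) * (sign π' : ℤ) *
      (if coversPerm (canonPosS mu k) (canonPosT mu lam k n) π π' (idInj hkn) then 1 else 0) =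
      1 := by
  rw [sum_eq_single_of_mem _ (viaFintypeEmbedding_idInj_mem_CStab hkn hπ)]
  · rw [if_pos (coversPerm_viaFintypeEmbedding_idInj hkn π), viaFintypeEmbedding_sign, mul_one,
      ← Units.val_mul, Int.units_mul_self, Units.val_one]
  · intro π' hπ' hne
    rw [if_neg fun hcov => hne
      (eq_viaFintypeEmbedding_idInj_of_coversPerm hkn hmu hlam hstrip hπ hπ' hcov), mul_zero]

end Extension

/-- For the canonical pair `(s, t)` of standard Young tableaux for `(μ, λ)` (`μ ⊢ k`,
`λ ⊢ n`, `λ/μ` a horizontal strip), the signed sum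
`Σ_{π ∈ C_s} Σ_{π' ∈ C_t} sgn(π)·sgn(π')·1[({πs},{π't}) covers the identity injection]`
equals `|C_s| = (μ^⊤)! = ∏_j (μ^⊤_j)!`; in particular it is nonzero. -/
theorem stmt_6 (k n : ℕ) (hkn : k ≤ n) (mu : Nat.Partition k) (lam : Nat.Partition n)
    (hstrip : IsHorizStrip (partFun mu) (partFun lam)) :
    (∑ π ∈ CStab (canonPosS (partFun mu) k),
        ∑ π' ∈ CStab (canonPosT (partFun mu) (partFun lam) k n),
          (Equiv.Perm.sign π : ℤ) * (Equiv.Perm.sign π' : ℤ) *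
            (if coversPerm (canonPosS (partFun mu) k)
                (canonPosT (partFun mu) (partFun lam) k n) π π' (idInj hkn)
              then 1 else 0)) = ((CStab (canonPosS (partFun mu) k)).card : ℤ) ∧
    (CStab (canonPosS (partFun mu) k)).card =
      ∏ j ∈ Finset.range k, Nat.factorial (colHeight (partFun mu) j) := by
  have hmu := mu.isYoungShape_partFun
  have hlam := lam.isYoungShape_partFun
  refine ⟨?_, hmu.card_CStab_canonPosS⟩
  rw [sum_congr rfl fun π hπ =>
    sum_sign_mul_sign_mul_ite_coversPerm_eq_one hkn hmu hlam hstrip hπ, sum_const, nsmul_one]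
end

section
/- Let 0 ≤ k ≤ n. Let q, r be standard Young tableaux of shapes μ ⊢ k and λ ⊢ n with λ/μ a horizontal strip, and let s, t be standard Young tableaux of shapes μ' ⊢ k and λ' ⊢ n with λ'/μ' a horizontal strip. If (μ, λ) ≠ (μ', λ'), then ⟨f_{q,r}, f_{s,t}⟩ = 0, where ⟨f, g⟩ = Σ_{σ ∈ S_{k,n}} f(σ)·conj(g(σ)) is the standard inner product on ℂ[S_{k,n}]. -/
/-!
Write `f_{q,r}` as a signed sum of the indicators `g_{π,π'}` of the pairs of tabloids
`({πq},{π't})`. If `μ ≠ μ'`, one of `μ, μ'` fails to dominate the other, say `μ'` does not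
dominate `μ`. By the classical dominance lemma, every tabloid `{πq}` then has two entries
`a ≠ b` in one row which lie in one column of `s`. Precomposing `σ` with the transposition
`(a b)` fixes `g_{π,π'}` and negates `f_{s,t}` (reindex `π₂ ↦ (a b) π₂` in `C_s`), so
`⟨g_{π,π'}, f_{s,t}⟩ = 0`. The case `λ ≠ λ'` is the same with `(a b)` acting on `[n]`.
-/

open scoped Classical

/-- `pos` encodes a standard Young tableau of shape `lam` (given by its row lengths) with `m`
cells, recording the cell `pos v = (row, column)` of each value `v ∈ {0, …, m-1}` (0-indexed
values): each value occupies a cell of the diagram, distinct values occupy distinct cells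
(hence, the cells are in bijection with the values), and values strictly increase along each
row and down each column. -/
def IsSYTpos {m : ℕ} (lam : ℕ → ℕ) (pos : Fin m → ℕ × ℕ) : Prop :=
  (∀ v, (pos v).2 < lam (pos v).1) ∧ Function.Injective pos ∧
  (∀ v w, (pos v).1 = (pos w).1 → (pos v).2 < (pos w).2 → v < w) ∧
  (∀ v w, (pos v).2 = (pos w).2 → (pos v).1 < (pos w).1 → v < w)

/-- The function `f_{s,t} : S_{k,n} → ℂ`,
`f_{s,t}(σ) = Σ_{π ∈ C_s} Σ_{π' ∈ C_t} sgn(π)·sgn(π')·1[({πs},{π't}) covers σ]`,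
for Young tableaux `s, t` with position functions `posS, posT`. -/
noncomputable def fST {k n : ℕ} (posS : Fin k → ℕ × ℕ) (posT : Fin n → ℕ × ℕ)
    (σ : Fin k ↪ Fin n) : ℂ :=
  ∑ π ∈ CStab posS, ∑ π' ∈ CStab posT,
    ((Equiv.Perm.sign π : ℤ) : ℂ) * ((Equiv.Perm.sign π' : ℤ) : ℂ) *
      (if coversPerm posS posT π π' σ then 1 else 0)

open Finset Function Equiv

variable {m : ℕ}

-- The conjugate partition: `numPartsGE p (c + 1)` is the length of column `c`.
def numPartsGE (p : Nat.Partition m) (a : ℕ) : ℕ :=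
  Multiset.card (p.parts.filter (a ≤ ·))

lemma numPartsGE_antitone (p : Nat.Partition m) : Antitone (numPartsGE p) :=
  fun _ _ hab => Multiset.card_le_card (Multiset.monotone_filter_right _ fun _ hx => hab.trans hx)

lemma card_parts_le (p : Nat.Partition m) : Multiset.card p.parts ≤ m := by
  simpa [p.parts_sum] using Multiset.card_nsmul_le_sum (a := 1) fun _ hx => p.parts_pos hx

lemma numPartsGE_le (p : Nat.Partition m) (a : ℕ) : numPartsGE p a ≤ m :=
  (Multiset.card_le_card (Multiset.filter_le _ _)).trans (card_parts_le p)

lemma le_of_numPartsGE_pos (p : Nat.Partition m) {a : ℕ} (h : 0 < numPartsGE p a) : a ≤ m := by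
  obtain ⟨x, hx⟩ := Multiset.card_pos_iff_exists_mem.1 h
  rw [Multiset.mem_filter] at hx
  exact hx.2.trans (Nat.Partition.le_of_mem_parts hx.1)

lemma le_partFun_iff (p : Nat.Partition m) {i a : ℕ} (ha : 1 ≤ a) :
    a ≤ partFun p i ↔ i < numPartsGE p a := by
  have hbdd : BddAbove {a | i < numPartsGE p a} :=
    ⟨m, fun _ hx => le_of_numPartsGE_pos p (i.zero_le.trans_lt hx)⟩
  refine ⟨fun h => ?_, fun h => le_csSup hbdd h⟩
  change a ≤ sSup {a | i < numPartsGE p a} at h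
  have hne : {a | i < numPartsGE p a}.Nonempty :=
    Set.nonempty_iff_ne_empty.2 fun h0 => by
      simp only [h0, csSup_empty, bot_eq_zero', Nat.le_zero] at h; omega
  exact (Nat.sSup_mem hne hbdd).trans_le (numPartsGE_antitone p h)

lemma partFun_antitone (p : Nat.Partition m) : Antitone (partFun p) := by
  intro i j hij
  rcases Nat.eq_zero_or_pos (partFun p j) with h | h
  · simp [h]
  · exact (le_partFun_iff p h).2 (hij.trans_lt ((le_partFun_iff p h).1 le_rfl))

lemma partFun_le (p : Nat.Partition m) (i : ℕ) : partFun p i ≤ m := by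
  rcases Nat.eq_zero_or_pos (partFun p i) with h | h
  · simp [h]
  · exact le_of_numPartsGE_pos p (i.zero_le.trans_lt ((le_partFun_iff p h).1 le_rfl))

lemma partFun_eq_zero (p : Nat.Partition m) {i : ℕ} (hi : m ≤ i) : partFun p i = 0 := by
  by_contra h
  have := (le_partFun_iff p (Nat.one_le_iff_ne_zero.2 h)).1 le_rfl
  have := numPartsGE_le p (partFun p i)
  omega

lemma card_filter_le_partFun (p : Nat.Partition m) {a K : ℕ} (ha : 1 ≤ a) (hK : m ≤ K) :
    #{i ∈ range K | a ≤ partFun p i} = numPartsGE p a := by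
  have : {i ∈ range K | a ≤ partFun p i} = range (numPartsGE p a) := by
    ext i
    have := numPartsGE_le p a
    simp only [mem_filter, mem_range, le_partFun_iff p ha]
    omega
  rw [this, card_range]

lemma card_range_filter_lt {x M : ℕ} (h : x ≤ M) : #{a ∈ range M | a < x} = x := by
  rw [show {a ∈ range M | a < x} = range x by ext; simp only [mem_filter, mem_range]; omega,
    card_range]

lemma sum_range_countP_lt {s : Multiset ℕ} {M : ℕ} (hs : ∀ x ∈ s, x ≤ M) :
    ∑ a ∈ range M, s.countP (a < ·) = s.sum := by
  induction s using Multiset.induction_on with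
  | empty => simp
  | cons x s ih =>
    simp only [Multiset.countP_cons, sum_add_distrib, Multiset.sum_cons, sum_boole,
      Nat.cast_id, ih fun y hy => hs y (Multiset.mem_cons_of_mem hy),
      card_range_filter_lt (hs x (Multiset.mem_cons_self x s))]
    ring

lemma sum_range_partFun (p : Nat.Partition m) : ∑ i ∈ range m, partFun p i = m := by
  calc ∑ i ∈ range m, partFun p i = ∑ i ∈ range m, #{a ∈ range m | a < partFun p i} :=
        sum_congr rfl fun i _ => (card_range_filter_lt (partFun_le p i)).symm
    _ = ∑ a ∈ range m, #{i ∈ range m | a < partFun p i} :=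
        sum_card_bipartiteAbove_eq_sum_card_bipartiteBelow (fun i a => a < partFun p i)
    _ = ∑ a ∈ range m, p.parts.countP (a < ·) := by
        refine sum_congr rfl fun a _ => ?_
        simp only [Nat.lt_iff_add_one_le, card_filter_le_partFun p le_add_self le_rfl,
          numPartsGE, Multiset.countP_eq_card_filter]
    _ = m := by
        rw [sum_range_countP_lt fun _ hx => Nat.Partition.le_of_mem_parts hx, p.parts_sum]

lemma numPartsGE_eq_add_count (p : Nat.Partition m) (a : ℕ) :
    numPartsGE p a = numPartsGE p (a + 1) + p.parts.count a := by
  have hsplit : p.parts.filter (a ≤ ·) = p.parts.filter (a + 1 ≤ ·) + p.parts.filter (a = ·) := by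
    rw [Multiset.filter_add_filter,
      (Multiset.filter_eq_nil (p := fun x => a + 1 ≤ x ∧ a = x)).2 fun x _ h => by omega, add_zero]
    exact Multiset.filter_congr fun x _ => by omega
  rw [numPartsGE, numPartsGE, hsplit, Multiset.card_add, Multiset.count_eq_card_filter_eq]

lemma partFun_injective : Injective (partFun : Nat.Partition m → ℕ → ℕ) := by
  intro p p' h
  have hN : ∀ a, 1 ≤ a → numPartsGE p a = numPartsGE p' a := fun a ha => by
    rw [← card_filter_le_partFun p ha le_rfl, ← card_filter_le_partFun p' ha le_rfl, h]
  refine Nat.Partition.ext (Multiset.ext' fun a => ?_)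
  rcases Nat.eq_zero_or_pos a with rfl | ha
  · rw [Multiset.count_eq_zero_of_notMem fun h0 => (p.parts_pos h0).false,
      Multiset.count_eq_zero_of_notMem fun h0 => (p'.parts_pos h0).false]
  · have := numPartsGE_eq_add_count p a
    have := numPartsGE_eq_add_count p' a
    have := hN a ha
    have := hN (a + 1) le_add_self
    omega

def Dominates (a b : ℕ → ℕ) : Prop :=
  ∀ i, ∑ j ∈ range i, b j ≤ ∑ j ∈ range i, a j

lemma Dominates.antisymm {a b : ℕ → ℕ} (hab : Dominates a b) (hba : Dominates b a) : a = b := by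
  have hsum : ∀ i, ∑ j ∈ range i, a j = ∑ j ∈ range i, b j := fun i => (hba i).antisymm (hab i)
  funext i
  have := hsum (i + 1)
  rw [sum_range_succ, sum_range_succ, hsum i] at this
  omega

lemma not_dominates_or_not_dominates {p p' : Nat.Partition m} (h : p ≠ p') :
    ¬Dominates (partFun p') (partFun p) ∨ ¬Dominates (partFun p) (partFun p') := by
  by_contra! hd
  exact h (partFun_injective (hd.2.antisymm hd.1))

lemma card_row_eq_partFun {p : Nat.Partition m} {u : Fin m → ℕ × ℕ}
    (hu : ∀ v, (u v).2 < partFun p (u v).1) (hinj : Injective u) (j : ℕ) :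
    #{v | (u v).1 = j} = partFun p j := by
  have hle : ∀ j, #{v | (u v).1 = j} ≤ partFun p j := fun j => by
    simpa using card_le_card_of_injOn (fun v => (u v).2) (t := range (partFun p j))
      (fun v hv => by have := hu v; simp_all)
      (fun v hv w hw hvw => hinj (Prod.ext (by simp_all) hvw))
  have hrow : ∀ v, (u v).1 < m := fun v => by
    by_contra h
    have := partFun_eq_zero p (not_lt.1 h)
    have := hu v
    omega
  have htotal : ∑ j ∈ range m, #{v | (u v).1 = j} = ∑ j ∈ range m, partFun p j := by
    rw [sum_range_partFun, ← card_eq_sum_card_fiberwise fun v _ => mem_range.2 (hrow v),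
      card_univ, Fintype.card_fin]
  by_cases hj : j < m
  · exact (sum_eq_sum_iff_of_le fun j _ => hle j).1 htotal j (mem_range.2 hj)
  · have := hle j
    rw [partFun_eq_zero p (not_lt.1 hj)] at this ⊢
    omega

lemma dominates_of_injective_row_col {p p' : Nat.Partition m} {u w : Fin m → ℕ × ℕ}
    (hu : ∀ v, (u v).2 < partFun p (u v).1) (hu' : Injective u)
    (hw : ∀ v, (w v).2 < partFun p' (w v).1) (hw' : Injective w)
    (h : Injective fun v => ((u v).1, (w v).2)) : Dominates (partFun p') (partFun p) := by
  intro i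
  set S : Finset (Fin m) := {v | (u v).1 < i}
  have hcol : ∀ c, #{v ∈ S | (w v).2 = c} ≤ #{j ∈ range i | c < partFun p' j} := by
    intro c
    -- `{j ∈ range i | c < λ'_j}` is all of `range i` or contains every row of `w` meeting
    -- column `c`: inject via the rows of `u` in the first case, of `w` in the second.
    by_cases hc : c < partFun p' i
    · have : {j ∈ range i | c < partFun p' j} = range i :=
        filter_true_of_mem fun j hj => hc.trans_le (partFun_antitone p' (mem_range.1 hj).le)
      rw [this]
      refine card_le_card_of_injOn (fun v => (u v).1) (fun v hv => ?_)
        fun v hv v' hv' hvv' => h (Prod.ext hvv' ?_)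
      · simp_all [S]
      · simp_all [S]
    · refine card_le_card_of_injOn (fun v => (w v).1) (fun v hv => ?_)
        fun v hv v' hv' hvv' => hw' (Prod.ext hvv' ?_)
      · obtain ⟨-, hvc⟩ := mem_filter.1 hv
        have hcv : c < partFun p' (w v).1 := hvc ▸ hw v
        refine mem_coe.2 (mem_filter.2 ⟨mem_range.2 ?_, hcv⟩)
        by_contra hwi
        exact hc (hcv.trans_le (partFun_antitone p' (not_lt.1 hwi)))
      · simp_all [S]
  calc ∑ j ∈ range i, partFun p j = #S := by
        rw [card_eq_sum_card_fiberwise (f := fun v => (u v).1) (t := range i)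
          fun v hv => by simpa [S] using hv]
        refine sum_congr rfl fun j hj => ?_
        rw [← card_row_eq_partFun hu hu' j, filter_filter]
        congr 1
        exact filter_congr fun v _ => by simp at hj; omega
    _ = ∑ c ∈ range m, #{v ∈ S | (w v).2 = c} :=
        card_eq_sum_card_fiberwise fun v _ => mem_range.2 ((hw v).trans_le (partFun_le p' _))
    _ ≤ ∑ c ∈ range m, #{j ∈ range i | c < partFun p' j} := sum_le_sum fun c _ => hcol c
    _ = ∑ j ∈ range i, #{c ∈ range m | c < partFun p' j} :=
        sum_card_bipartiteAbove_eq_sum_card_bipartiteBelow _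
    _ = ∑ j ∈ range i, partFun p' j :=
        sum_congr rfl fun j _ => card_range_filter_lt (partFun_le p' j)

lemma exists_pair_row_col_of_not_dominates {p p' : Nat.Partition m} {u w : Fin m → ℕ × ℕ}
    (hu : IsSYTpos (partFun p) u) (hw : IsSYTpos (partFun p') w)
    (h : ¬Dominates (partFun p') (partFun p)) (π : Perm (Fin m)) :
    ∃ a b, a ≠ b ∧ (u (π⁻¹ a)).1 = (u (π⁻¹ b)).1 ∧ (w a).2 = (w b).2 := by
  have : ¬Injective fun v => ((u (π⁻¹ v)).1, (w v).2) := fun hinj =>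
    h (dominates_of_injective_row_col (fun v => hu.1 _) (hu.2.1.comp π⁻¹.injective) hw.1 hw.2.1
      hinj)
  obtain ⟨a, b, hab, hne⟩ := not_injective_iff.1 this
  exact ⟨a, b, hne, Prod.ext_iff.1 hab⟩

lemma sum_eq_zero_of_apply_equiv_eq_neg {X G : Type*} [Fintype X] [AddCommGroup G]
    [IsAddTorsionFree G] (e : X ≃ X) {f : X → G} (hf : ∀ x, f (e x) = -f x) : ∑ x, f x = 0 := by
  rw [← self_eq_neg, ← sum_neg_distrib]
  conv_lhs => rw [← e.sum_comp]
  exact sum_congr rfl fun x _ => hf x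

lemma sum_mul_star_eq_zero_comm {X R : Type*} [Fintype X] [CommSemiring R] [StarRing R]
    {F G : X → R} (h : ∑ x, G x * starRingEnd R (F x) = 0) :
    ∑ x, F x * starRingEnd R (G x) = 0 := by
  simpa [map_sum, mul_comm] using congrArg (starRingEnd R) h

section Tabloids

variable {k n : ℕ} {posS : Fin k → ℕ × ℕ} {posT : Fin n → ℕ × ℕ}

lemma mem_CStab {pos : Fin m → ℕ × ℕ} {π : Perm (Fin m)} :
    π ∈ CStab pos ↔ ∀ v, (pos (π v)).2 = (pos v).2 := by
  simp [CStab]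

lemma swap_mul_mem_CStab_iff {pos : Fin m → ℕ × ℕ} {a b : Fin m} (h : (pos a).2 = (pos b).2)
    {π : Perm (Fin m)} : swap a b * π ∈ CStab pos ↔ π ∈ CStab pos := by
  simp only [mem_CStab, Perm.mul_apply, apply_swap_eq_self (v := fun x => (pos x).2) h]

lemma coversPerm_swap_trans_iff {π : Perm (Fin k)} {π' : Perm (Fin n)} {σ : Fin k ↪ Fin n}
    {a b : Fin k} (hrow : (posS (π⁻¹ a)).1 = (posS (π⁻¹ b)).1) :
    coversPerm posS posT π π' ((swap a b).toEmbedding.trans σ) ↔ coversPerm posS posT π π' σ := by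
  simp only [coversPerm, Embedding.trans_apply, coe_toEmbedding]
  rw [← (swap a b).forall_congr_right]
  simp only [swap_apply_self, apply_swap_eq_self (v := fun x => (posS (π⁻¹ x)).1) hrow]

lemma coversPerm_trans_swap_iff {π : Perm (Fin k)} {π' : Perm (Fin n)} {σ : Fin k ↪ Fin n}
    {a b : Fin n} (hrow : (posT (π'⁻¹ a)).1 = (posT (π'⁻¹ b)).1) :
    coversPerm posS posT π π' (σ.trans (swap a b).toEmbedding) ↔ coversPerm posS posT π π' σ := by
  simp only [coversPerm, Embedding.trans_apply, coe_toEmbedding,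
    apply_swap_eq_self (v := fun x => (posT (π'⁻¹ x)).1) hrow]

lemma coversPerm_swap_mul_fst_iff {π : Perm (Fin k)} {π' : Perm (Fin n)} {σ : Fin k ↪ Fin n}
    {a b : Fin k} :
    coversPerm posS posT (swap a b * π) π' σ ↔
      coversPerm posS posT π π' ((swap a b).toEmbedding.trans σ) := by
  simp only [coversPerm, Embedding.trans_apply, coe_toEmbedding, mul_inv_rev, swap_inv,
    Perm.mul_apply]
  rw [← (swap a b).forall_congr_right]
  simp only [swap_apply_self]

lemma coversPerm_swap_mul_snd_iff {π : Perm (Fin k)} {π' : Perm (Fin n)} {σ : Fin k ↪ Fin n}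
    {a b : Fin n} :
    coversPerm posS posT π (swap a b * π') σ ↔
      coversPerm posS posT π π' (σ.trans (swap a b).toEmbedding) := by
  simp only [coversPerm, Embedding.trans_apply, coe_toEmbedding, mul_inv_rev, swap_inv,
    Perm.mul_apply]

lemma intCast_sign_swap_mul {a b : Fin m} (hab : a ≠ b) (π : Perm (Fin m)) :
    ((Perm.sign (swap a b * π) : ℤ) : ℂ) = -((Perm.sign π : ℤ) : ℂ) := by
  simp [Perm.sign_mul, Perm.sign_swap hab]

lemma fST_swap_trans {a b : Fin k} (hab : a ≠ b) (hcol : (posS a).2 = (posS b).2)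
    (σ : Fin k ↪ Fin n) :
    fST posS posT ((swap a b).toEmbedding.trans σ) = -fST posS posT σ := by
  rw [fST, fST, ← sum_neg_distrib]
  refine sum_equiv (Equiv.mulLeft (swap a b)) (fun π => (swap_mul_mem_CStab_iff hcol).symm)
    fun π _ => ?_
  simp only [Equiv.coe_mulLeft, intCast_sign_swap_mul hab, coversPerm_swap_mul_fst_iff,
    ← sum_neg_distrib, neg_mul, neg_neg]

lemma fST_trans_swap {a b : Fin n} (hab : a ≠ b) (hcol : (posT a).2 = (posT b).2)
    (σ : Fin k ↪ Fin n) :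
    fST posS posT (σ.trans (swap a b).toEmbedding) = -fST posS posT σ := by
  rw [fST, fST, ← sum_neg_distrib]
  refine sum_congr rfl fun π _ => ?_
  rw [← sum_neg_distrib]
  refine sum_equiv (Equiv.mulLeft (swap a b)) (fun π' => (swap_mul_mem_CStab_iff hcol).symm)
    fun π' _ => ?_
  simp only [Equiv.coe_mulLeft, intCast_sign_swap_mul hab, coversPerm_swap_mul_snd_iff, mul_neg,
    neg_mul, neg_neg]

lemma sum_fST_mul_eq_zero {G : (Fin k ↪ Fin n) → ℂ}
    (h : ∀ π π', ∑ σ, (if coversPerm posS posT π π' σ then 1 else 0) * G σ = 0) :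
    ∑ σ, fST posS posT σ * G σ = 0 := by
  simp only [fST, sum_mul]
  rw [sum_comm]
  refine sum_eq_zero fun π _ => ?_
  rw [sum_comm]
  refine sum_eq_zero fun π' _ => ?_
  simp only [mul_assoc, ← mul_sum, h, mul_zero]

lemma sum_fST_mul_conj_eq_zero_of_swap_left (r t : Fin n → ℕ × ℕ) {q s : Fin k → ℕ × ℕ}
    (h : ∀ π : Perm (Fin k), ∃ a b, a ≠ b ∧ (q (π⁻¹ a)).1 = (q (π⁻¹ b)).1 ∧ (s a).2 = (s b).2) :
    ∑ σ, fST q r σ * starRingEnd ℂ (fST s t σ) = 0 := by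
  refine sum_fST_mul_eq_zero fun π π' => ?_
  obtain ⟨a, b, hab, hrow, hcol⟩ := h π
  have hinv : Involutive fun σ : Fin k ↪ Fin n => (swap a b).toEmbedding.trans σ :=
    fun σ => by ext; simp
  refine sum_eq_zero_of_apply_equiv_eq_neg (hinv.toPerm _) fun σ => ?_
  simp only [Involutive.coe_toPerm, coversPerm_swap_trans_iff hrow, fST_swap_trans hab hcol,
    map_neg, mul_neg]

lemma sum_fST_mul_conj_eq_zero_of_swap_right (q s : Fin k → ℕ × ℕ) {r t : Fin n → ℕ × ℕ}
    (h : ∀ π' : Perm (Fin n), ∃ a b, a ≠ b ∧ (r (π'⁻¹ a)).1 = (r (π'⁻¹ b)).1 ∧ (t a).2 = (t b).2) :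
    ∑ σ, fST q r σ * starRingEnd ℂ (fST s t σ) = 0 := by
  refine sum_fST_mul_eq_zero fun π π' => ?_
  obtain ⟨a, b, hab, hrow, hcol⟩ := h π'
  have hinv : Involutive fun σ : Fin k ↪ Fin n => σ.trans (swap a b).toEmbedding :=
    fun σ => by ext; simp
  refine sum_eq_zero_of_apply_equiv_eq_neg (hinv.toPerm _) fun σ => ?_
  simp only [Involutive.coe_toPerm, coversPerm_trans_swap_iff hrow, fST_trans_swap hab hcol,
    map_neg, mul_neg]

end Tabloids

theorem stmt_8_general (k n : ℕ)
    (mu mu' : Nat.Partition k) (lam lam' : Nat.Partition n)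
    (q : Fin k → ℕ × ℕ) (r : Fin n → ℕ × ℕ) (s : Fin k → ℕ × ℕ) (t : Fin n → ℕ × ℕ)
    (hq : IsSYTpos (partFun mu) q) (hr : IsSYTpos (partFun lam) r)
    (hs : IsSYTpos (partFun mu') s) (ht : IsSYTpos (partFun lam') t)
    (hne : (mu, lam) ≠ (mu', lam')) :
    ∑ σ : Fin k ↪ Fin n, fST q r σ * (starRingEnd ℂ) (fST s t σ) = 0 := by
  obtain hmu | hlam : mu ≠ mu' ∨ lam ≠ lam' := by
    rwa [Ne, Prod.mk.injEq, not_and_or] at hne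
  · rcases not_dominates_or_not_dominates hmu with h | h
    · exact sum_fST_mul_conj_eq_zero_of_swap_left r t
        (exists_pair_row_col_of_not_dominates hq hs h)
    · exact sum_mul_star_eq_zero_comm (sum_fST_mul_conj_eq_zero_of_swap_left t r
        (exists_pair_row_col_of_not_dominates hs hq h))
  · rcases not_dominates_or_not_dominates hlam with h | h
    · exact sum_fST_mul_conj_eq_zero_of_swap_right q s
        (exists_pair_row_col_of_not_dominates hr ht h)
    · exact sum_mul_star_eq_zero_comm (sum_fST_mul_conj_eq_zero_of_swap_right s q
        (exists_pair_row_col_of_not_dominates ht hr h))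

/-- If `q, r` are standard Young tableaux of shapes `μ ⊢ k`, `λ ⊢ n` with `λ/μ` a horizontal
strip, `s, t` are standard Young tableaux of shapes `μ' ⊢ k`, `λ' ⊢ n` with `λ'/μ'` a
horizontal strip, and `(μ, λ) ≠ (μ', λ')`, then `⟨f_{q,r}, f_{s,t}⟩ = 0` for the standard
inner product `⟨f, g⟩ = Σ_{σ ∈ S_{k,n}} f(σ)·conj(g(σ))` on `ℂ[S_{k,n}]`. -/
theorem stmt_8 (k n : ℕ) (hkn : k ≤ n)
    (mu mu' : Nat.Partition k) (lam lam' : Nat.Partition n)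
    (hstrip : IsHorizStrip (partFun mu) (partFun lam))
    (hstrip' : IsHorizStrip (partFun mu') (partFun lam'))
    (q : Fin k → ℕ × ℕ) (r : Fin n → ℕ × ℕ) (s : Fin k → ℕ × ℕ) (t : Fin n → ℕ × ℕ)
    (hq : IsSYTpos (partFun mu) q) (hr : IsSYTpos (partFun lam) r)
    (hs : IsSYTpos (partFun mu') s) (ht : IsSYTpos (partFun lam') t)
    (hne : (mu, lam) ≠ (mu', lam')) :
    ∑ σ : Fin k ↪ Fin n, fST q r σ * (starRingEnd ℂ) (fST s t σ) = 0 :=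
  stmt_8_general k n mu mu' lam lam' q r s t hq hr hs ht hne
end

section
/- Let 2 ≤ k ≤ n, let μ = (μ_1, …, μ_ℓ) ⊢ k, and let λ = (μ_1 + n − k, μ_2, …, μ_ℓ) ⊢ n. Let (s, t) be the canonical pair of standard Young tableaux for (μ, λ). If σ ∈ S_{k,n} satisfies |[k] \ σ([k])| > μ_1 (equivalently, the union of σ with the identity injection has more than μ_1 nontrivial paths), then Σ_{π ∈ C_t} sgn(π)·1[({s},{πt}) covers σ] = 0. (Hence the spherical function ω^{μ⊗λ} vanishes on every sphere whose path type ρ has more than μ_1 nonzero parts.) -/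
open scoped Classical

/-- The shape `λ = (μ_1 + n − k, μ_2, …, μ_ℓ) ⊢ n` obtained from `μ ⊢ k` by appending a
horizontal strip of `n − k` cells to the first row. -/
noncomputable def lamBar {k : ℕ} (mu : Nat.Partition k) (n : ℕ) : ℕ → ℕ :=
  fun i => if i = 0 then partFun mu 0 + (n - k) else partFun mu i

lemma filt_count (L : List ℕ) (hL : L.Pairwise (· ≥ ·)) (a i : ℕ) :
    i < (L.filter (fun x => a ≤ x)).length ↔ ∃ h : i < L.length, a ≤ L[i] := by
  induction L generalizing i with
  | nil => simp
  | cons b L ih =>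
    rw [List.pairwise_cons] at hL
    by_cases hab : a ≤ b
    · cases i with
      | zero => simp [List.filter_cons, hab]
      | succ i =>
        simp only [List.filter_cons, if_pos, hab, List.length_cons, Nat.succ_lt_succ_iff,
          decide_eq_true_eq, List.getElem_cons_succ]
        exact ih hL.2 i
    · have hall : ∀ x ∈ b :: L, x < a := by
        intro x hx
        rcases List.mem_cons.mp hx with rfl | hx
        · omega
        · exact lt_of_le_of_lt (hL.1 x hx) (by omega)
      constructor
      · intro h
        rw [List.filter_eq_nil_iff.mpr (by intro x hx; simpa using Nat.not_le.mpr (hall x hx))] at h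
        simp at h
      · rintro ⟨h, hle⟩
        exact absurd hle (Nat.not_le.mpr (hall _ (List.getElem_mem h)))

noncomputable def sortedParts {k : ℕ} (mu : Nat.Partition k) : List ℕ :=
  mu.parts.sort (· ≥ ·)

lemma partFun_eq {k : ℕ} (mu : Nat.Partition k) (i : ℕ) :
    partFun mu i = (sortedParts mu).getD i 0 := by
  have hs : (sortedParts mu).Pairwise (· ≥ ·) := Multiset.pairwise_sort _ _
  have hcard : ∀ a : ℕ, Multiset.card (mu.parts.filter (fun x => a ≤ x))
      = (List.filter (fun x => a ≤ x) (sortedParts mu)).length := by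
    intro a
    rw [show mu.parts = ((sortedParts mu : List ℕ) : Multiset ℕ) from
      (Multiset.sort_eq _ _).symm, Multiset.filter_coe, Multiset.coe_card]
  unfold partFun
  by_cases h : i < (sortedParts mu).length
  · rw [List.getD_eq_getElem _ _ h]
    have hset : {a : ℕ | i < Multiset.card (Multiset.filter (fun x => a ≤ x) mu.parts)}
        = Set.Iic ((sortedParts mu)[i]) := by
      ext a
      simp only [Set.mem_setOf_eq, hcard, filt_count _ hs, Set.mem_Iic]
      constructor
      · rintro ⟨_, h2⟩; exact h2
      · intro h2; exact ⟨h, h2⟩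
    rw [hset, csSup_Iic]
  · have hset : {a : ℕ | i < Multiset.card (Multiset.filter (fun x => a ≤ x) mu.parts)}
        = ∅ := by
      ext a
      simp only [Set.mem_setOf_eq, hcard, filt_count _ hs, Set.mem_empty_iff_false, iff_false]
      rintro ⟨h2, _⟩
      exact h h2
    rw [hset, List.getD_eq_default _ _ (le_of_not_gt h)]
    exact csSup_empty

lemma sum_getD (L : List ℕ) : ∑ i ∈ Finset.range L.length, L.getD i 0 = L.sum := by
  induction L with
  | nil => simp
  | cons b L ih =>
    rw [List.length_cons, Finset.sum_range_succ']
    simp only [List.getD_cons_succ, List.getD_cons_zero, List.sum_cons, ih]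
    omega

lemma partFun_le_zero {k : ℕ} (mu : Nat.Partition k) (i : ℕ) :
    partFun mu i ≤ partFun mu 0 := by
  rw [partFun_eq, partFun_eq]
  by_cases h : i < (sortedParts mu).length
  · have h0 : 0 < (sortedParts mu).length := Nat.pos_of_ne_zero (by omega)
    rw [List.getD_eq_getElem _ _ h, List.getD_eq_getElem _ _ h0]
    exact List.Pairwise.rel_get_of_le (Multiset.pairwise_sort _ _)
      (a := ⟨0, h0⟩) (b := ⟨i, h⟩) (Nat.zero_le i)
  · rw [List.getD_eq_default _ _ (le_of_not_gt h)]
    exact Nat.zero_le _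

lemma partFun_eq_zero_of_ge {k : ℕ} (mu : Nat.Partition k) {i : ℕ}
    (h : (sortedParts mu).length ≤ i) : partFun mu i = 0 := by
  rw [partFun_eq, List.getD_eq_default _ _ h]

lemma sum_partFun_ge {k N : ℕ} (mu : Nat.Partition k)
    (h : (sortedParts mu).length ≤ N) : k ≤ ∑ a ∈ Finset.range N, partFun mu a := by
  have h1 : ∑ a ∈ Finset.range (sortedParts mu).length, partFun mu a = k := by
    rw [Finset.sum_congr rfl (fun a _ => partFun_eq mu a), sum_getD]
    have : ((sortedParts mu : List ℕ) : Multiset ℕ) = mu.parts := Multiset.sort_eq _ _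
    calc (sortedParts mu).sum = (((sortedParts mu : List ℕ) : Multiset ℕ)).sum := rfl
      _ = mu.parts.sum := by rw [this]
      _ = k := mu.parts_sum
  calc k = ∑ a ∈ Finset.range (sortedParts mu).length, partFun mu a := h1.symm
    _ ≤ ∑ a ∈ Finset.range N, partFun mu a :=
      Finset.sum_le_sum_of_subset (Finset.range_subset_range.mpr h)

lemma partFun_zero_pos {k : ℕ} (mu : Nat.Partition k) (hk : 0 < k) : 0 < partFun mu 0 := by
  have hlen : 0 < (sortedParts mu).length := by
    by_contra h
    have := sum_partFun_ge (N := 0) mu (by omega)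
    simp at this; omega
  rw [partFun_eq, List.getD_eq_getElem _ _ hlen]
  refine mu.parts_pos ?_
  have : (sortedParts mu)[0] ∈ sortedParts mu := List.getElem_mem hlen
  exact (Multiset.mem_sort _).mp this

lemma canonRow_spec {k : ℕ} (mu : Nat.Partition k) {v : ℕ} (hv : v < k) :
    v < ∑ a ∈ Finset.range (canonRow (partFun mu) v + 1), partFun mu a ∧
    ∑ a ∈ Finset.range (canonRow (partFun mu) v), partFun mu a ≤ v := by
  have hne : {i : ℕ | v < ∑ a ∈ Finset.range (i + 1), partFun mu a}.Nonempty := by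
    refine ⟨(sortedParts mu).length, ?_⟩
    exact lt_of_lt_of_le hv (sum_partFun_ge mu (by omega))
  constructor
  · exact Nat.sInf_mem hne
  · rcases Nat.eq_zero_or_pos (canonRow (partFun mu) v) with h | h
    · rw [h]; simp
    · have hlt : canonRow (partFun mu) v - 1 < canonRow (partFun mu) v := by omega
      have hnm := Nat.notMem_of_lt_sInf
        (s := {i : ℕ | v < ∑ a ∈ Finset.range (i + 1), partFun mu a}) hlt
      simp only [Set.mem_setOf_eq, not_lt] at hnm
      have : canonRow (partFun mu) v - 1 + 1 = canonRow (partFun mu) v := by omega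
      rwa [this] at hnm

lemma canonCol_lt {k : ℕ} (mu : Nat.Partition k) {v : ℕ} (hv : v < k) :
    canonCol (partFun mu) v < partFun mu 0 := by
  obtain ⟨h1, h2⟩ := canonRow_spec mu hv
  rw [Finset.sum_range_succ] at h1
  have h3 := partFun_le_zero mu (canonRow (partFun mu) v)
  unfold canonCol
  omega

lemma canonRow_zero_lt {k : ℕ} (mu : Nat.Partition k) {v : ℕ} (hv : v < k)
    (h : canonRow (partFun mu) v = 0) : v < partFun mu 0 := by
  have h1 := (canonRow_spec mu hv).1
  rw [h] at h1
  simpa using h1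

lemma colHeight_partFun_zero_iff {k : ℕ} (mu : Nat.Partition k) (j : ℕ) :
    colHeight (partFun mu) j = 0 ↔ partFun mu 0 ≤ j := by
  have hne : {i : ℕ | partFun mu i ≤ j}.Nonempty :=
    ⟨(sortedParts mu).length, by
      simp only [Set.mem_setOf_eq, partFun_eq_zero_of_ge mu le_rfl]; omega⟩
  constructor
  · intro h
    have := Nat.sInf_mem hne
    rw [show sInf {i : ℕ | partFun mu i ≤ j} = colHeight (partFun mu) j from rfl, h] at this
    exact this
  · intro h
    exact Nat.sInf_eq_zero.mpr (Or.inl h)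

lemma colHeight_strip {k n : ℕ} (mu : Nat.Partition k) {j : ℕ}
    (h : colHeight (partFun mu) j < colHeight (lamBar mu n) j) :
    colHeight (partFun mu) j = 0 := by
  by_contra hne0
  have hne : {i : ℕ | partFun mu i ≤ j}.Nonempty :=
    ⟨(sortedParts mu).length, by
      simp only [Set.mem_setOf_eq, partFun_eq_zero_of_ge mu le_rfl]; omega⟩
  have hmem : partFun mu (colHeight (partFun mu) j) ≤ j := Nat.sInf_mem hne
  have hlam : lamBar mu n (colHeight (partFun mu) j) ≤ j := by
    rw [lamBar, if_neg hne0]; exact hmem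
  have : colHeight (lamBar mu n) j ≤ colHeight (partFun mu) j :=
    Nat.sInf_le (s := {i : ℕ | lamBar mu n i ≤ j}) hlam
  omega

lemma mem_stripCols_le {k n : ℕ} (mu : Nat.Partition k) {j : ℕ}
    (h : j ∈ stripCols (partFun mu) (lamBar mu n)) : partFun mu 0 ≤ j := by
  rw [stripCols, Finset.mem_sort] at h
  exact (colHeight_partFun_zero_iff mu j).mp
    (colHeight_strip mu (n := n) (Finset.mem_filter.mp h).2)

lemma stripCols_length {k n : ℕ} (mu : Nat.Partition k) (hkn : k ≤ n) :
    n - k ≤ (stripCols (partFun mu) (lamBar mu n)).length := by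
  rw [stripCols, Finset.length_sort]
  have hsub : (Finset.range (n - k)).image (fun d => partFun mu 0 + d) ⊆
      (Finset.range (lamBar mu n 0)).filter
        (fun j => colHeight (partFun mu) j < colHeight (lamBar mu n) j) := by
    intro j hj
    simp only [Finset.mem_image, Finset.mem_range] at hj
    obtain ⟨d, hd, rfl⟩ := hj
    refine Finset.mem_filter.mpr ⟨Finset.mem_range.mpr ?_, ?_⟩
    · rw [lamBar, if_pos rfl]; omega
    · have h0 : colHeight (partFun mu) (partFun mu 0 + d) = 0 :=
        (colHeight_partFun_zero_iff mu _).mpr (by omega)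
      have hlne : {i : ℕ | lamBar mu n i ≤ partFun mu 0 + d}.Nonempty :=
        ⟨(sortedParts mu).length + 1, by
          simp only [Set.mem_setOf_eq, lamBar, if_neg (Nat.succ_ne_zero _),
            partFun_eq_zero_of_ge mu (Nat.le_succ _)]; omega⟩
      have hmem : lamBar mu n (colHeight (lamBar mu n) (partFun mu 0 + d))
          ≤ partFun mu 0 + d := Nat.sInf_mem hlne
      have hpos : colHeight (lamBar mu n) (partFun mu 0 + d) ≠ 0 := by
        intro h0'
        rw [h0', lamBar, if_pos rfl] at hmem
        omega
      omega
  have hcard : ((Finset.range (n - k)).image (fun d => partFun mu 0 + d)).card = n - k := by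
    rw [Finset.card_image_of_injective _ (add_right_injective _), Finset.card_range]
  calc n - k = _ := hcard.symm
    _ ≤ _ := Finset.card_le_card hsub

lemma posT_of_ge {k n : ℕ} (mu : Nat.Partition k) (hkn : k ≤ n) {v : Fin n}
    (h : k ≤ (v : ℕ)) :
    (canonPosT (partFun mu) (lamBar mu n) k n v).1 = 0 ∧
    partFun mu 0 ≤ (canonPosT (partFun mu) (lamBar mu n) k n v).2 := by
  rw [canonPosT, if_neg (not_lt.mpr h)]
  set L := stripCols (partFun mu) (lamBar mu n) with hL
  have hvn : (v : ℕ) < n := v.isLt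
  have hlen : (v : ℕ) - k < L.length :=
    lt_of_lt_of_le (by omega) (stripCols_length mu hkn)
  have hmem : L.getD ((v : ℕ) - k) 0 ∈ L := by
    rw [List.getD_eq_getElem _ _ hlen]
    exact List.getElem_mem hlen
  have hle := mem_stripCols_le mu hmem
  exact ⟨(colHeight_partFun_zero_iff mu _).mpr hle, hle⟩

lemma posT_col_lt {k n : ℕ} (mu : Nat.Partition k) {v : Fin n} (h : (v : ℕ) < k) :
    (canonPosT (partFun mu) (lamBar mu n) k n v).2 < partFun mu 0 := by
  rw [canonPosT, if_pos h]
  exact canonCol_lt mu h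


/-- Let `μ ⊢ k`, `λ = (μ_1 + n − k, μ_2, …) ⊢ n`, and let `(s, t)` be the canonical pair of
standard Young tableaux for `(μ, λ)`. If `σ ∈ S_{k,n}` satisfies `|[k] \ σ([k])| > μ_1`
(i.e. the union of `σ` with the identity injection has more than `μ_1` nontrivial paths),
then `Σ_{π ∈ C_t} sgn(π)·1[({s},{πt}) covers σ] = 0`. -/
theorem stmt_10 (k n : ℕ) (hk2 : 2 ≤ k) (hkn : k ≤ n) (mu : Nat.Partition k)
    (σ : Fin k ↪ Fin n)
    (hpaths : partFun mu 0 <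
      (Finset.univ.filter (fun j : Fin n => (j : ℕ) < k ∧ ∀ i, σ i ≠ j)).card) :
    ∑ π ∈ CStab (canonPosT (partFun mu) (lamBar mu n) k n),
      (Equiv.Perm.sign π : ℤ) *
        (if coversPerm (canonPosS (partFun mu) k) (canonPosT (partFun mu) (lamBar mu n) k n)
            1 π σ then 1 else 0) = 0 := by
  apply Finset.sum_eq_zero
  intro π hπ
  have hcol : ∀ v, (canonPosT (partFun mu) (lamBar mu n) k n (π v)).2
      = (canonPosT (partFun mu) (lamBar mu n) k n v).2 :=
    (Finset.mem_filter.mp hπ).2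
  rw [if_neg, mul_zero]
  intro hcov
  have hcov' : ∀ i, (canonPosS (partFun mu) k ((1 : Equiv.Perm (Fin k))⁻¹ i)).1
      = (canonPosT (partFun mu) (lamBar mu n) k n (π⁻¹ (σ i))).1 := hcov
  have hπlt : ∀ v : Fin n, (v : ℕ) < k → ((π v : Fin n) : ℕ) < k := by
    intro v hv
    by_contra hge
    have h1 := posT_col_lt mu (n := n) hv
    have h2 := (posT_of_ge mu hkn (v := π v) (le_of_not_gt hge)).2
    rw [hcol v] at h2
    omega
  have hπinv : ∀ v : Fin n, k ≤ (v : ℕ) → k ≤ ((π⁻¹ v : Fin n) : ℕ) := by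
    intro v hv
    by_contra hlt
    have h := hπlt _ (lt_of_not_ge hlt)
    rw [show π (π⁻¹ v) = v from Equiv.apply_symm_apply π v] at h
    omega
  set B := Finset.univ.filter (fun i : Fin k => k ≤ ((σ i : Fin n) : ℕ)) with hB
  have hBsub : ∀ i ∈ B, (i : ℕ) < partFun mu 0 := by
    intro i hi
    have hσ : k ≤ ((σ i : Fin n) : ℕ) := (Finset.mem_filter.mp hi).2
    have h1 := hcov' i
    rw [inv_one, Equiv.Perm.one_apply] at h1
    rw [(posT_of_ge mu hkn (hπinv _ hσ)).1] at h1
    exact canonRow_zero_lt mu i.isLt h1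
  have hcard1 : B.card ≤ partFun mu 0 := by
    calc B.card = (B.image (fun i : Fin k => (i : ℕ))).card :=
          (Finset.card_image_of_injective _ Fin.val_injective).symm
      _ ≤ (Finset.range (partFun mu 0)).card := by
          refine Finset.card_le_card ?_
          intro x hx
          simp only [Finset.mem_image] at hx
          obtain ⟨i, hi, rfl⟩ := hx
          exact Finset.mem_range.mpr (hBsub i hi)
      _ = partFun mu 0 := Finset.card_range _
  set M := Finset.univ.filter (fun j : Fin n => (j : ℕ) < k ∧ ∀ i, σ i ≠ j) with hM
  set A := Finset.univ.filter (fun i : Fin k => ((σ i : Fin n) : ℕ) < k) with hA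
  have hAB : A.card + B.card = k := by
    have h := Finset.card_filter_add_card_filter_not (s := (Finset.univ : Finset (Fin k)))
      (p := fun i : Fin k => ((σ i : Fin n) : ℕ) < k)
    have hBeq : Finset.univ.filter (fun i : Fin k => ¬ ((σ i : Fin n) : ℕ) < k) = B := by
      rw [hB]
      exact Finset.filter_congr (fun i _ => by rw [not_lt])
    rw [hBeq] at h
    rw [← hA] at h
    rwa [Finset.card_univ, Fintype.card_fin] at h
  have hdisj : Disjoint (A.image σ) M := by
    rw [Finset.disjoint_left]
    intro j hj hjM
    simp only [Finset.mem_image] at hj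
    obtain ⟨i, _, rfl⟩ := hj
    exact (Finset.mem_filter.mp hjM).2.2 i rfl
  have hsubK : (A.image σ) ∪ M ⊆ Finset.univ.filter (fun j : Fin n => (j : ℕ) < k) := by
    intro j hj
    rcases Finset.mem_union.mp hj with hj | hj
    · simp only [Finset.mem_image] at hj
      obtain ⟨i, hi, rfl⟩ := hj
      exact Finset.mem_filter.mpr ⟨Finset.mem_univ _, (Finset.mem_filter.mp hi).2⟩
    · exact Finset.mem_filter.mpr ⟨Finset.mem_univ _, (Finset.mem_filter.mp hj).2.1⟩
  have hK : (Finset.univ.filter (fun j : Fin n => (j : ℕ) < k)).card = k := by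
    have heq : Finset.univ.filter (fun j : Fin n => (j : ℕ) < k)
        = Finset.univ.image (Fin.castLE hkn) := by
      ext j
      simp only [Finset.mem_filter, Finset.mem_univ, true_and, Finset.mem_image]
      constructor
      · intro hj
        exact ⟨⟨(j : ℕ), hj⟩, Fin.ext rfl⟩
      · rintro ⟨i, -, rfl⟩
        exact i.isLt
    rw [heq, Finset.card_image_of_injective _ (Fin.castLE_injective hkn),
      Finset.card_univ, Fintype.card_fin]
  have hAM : A.card + M.card ≤ k := by
    have h1 : (A.image σ).card + M.card = ((A.image σ) ∪ M).card :=
      (Finset.card_union_of_disjoint hdisj).symm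
    have h2 : ((A.image σ) ∪ M).card ≤ k := by
      exact le_of_le_of_eq (Finset.card_le_card hsubK) hK
    rw [Finset.card_image_of_injective _ σ.injective] at h1
    omega
  omega
end

section
/- (Singleton bound for injection codes) Let 1 ≤ d ≤ k ≤ n and let Γ ⊆ S_{k,n} be a set of injections such that any two distinct elements of Γ have Hamming distance at least d. Then |Γ| ≤ n!/(n − k + d − 1)!. -/
/-! Restricting injections to their first `k - d + 1` positions is injective on `Γ`: two
codewords with the same restriction differ in at most `d - 1` positions. Hence `|Γ|` is at most
the number of injections `[k - d + 1] ↪ [n]`, which is `n! / (n - k + d - 1)!`. -/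

open scoped Classical

/-- The Hamming distance between two injections `σ, τ : [k] ↪ [n]`:
the number of positions `i ∈ [k]` with `σ(i) ≠ τ(i)`. -/
noncomputable def hamDist {k n : ℕ} (σ τ : Fin k ↪ Fin n) : ℕ :=
  (Finset.univ.filter fun i => σ i ≠ τ i).card

open Finset

theorem hamDist_le_of_castLEEmb_trans_eq {k n m : ℕ} (hmk : m ≤ k) {σ τ : Fin k ↪ Fin n}
    (h : (Fin.castLEEmb hmk).trans σ = (Fin.castLEEmb hmk).trans τ) :
    hamDist σ τ ≤ k - m := by
  have hsub : ({i | σ i ≠ τ i} : Finset (Fin k)) ⊆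
      univ \ ({i | (i : ℕ) < m} : Finset (Fin k)) := by
    intro i
    simp only [mem_filter, mem_univ, true_and, mem_sdiff]
    intro hne hlt
    exact hne (DFunLike.congr_fun h ⟨i, hlt⟩)
  calc hamDist σ τ ≤ #(univ \ ({i | (i : ℕ) < m} : Finset (Fin k))) := card_le_card hsub
    _ = k - m := by
      rw [card_sdiff_of_subset (subset_univ _), Fin.card_filter_val_lt, card_univ,
        Fintype.card_fin, min_eq_right hmk]

theorem injOn_castLEEmb_trans_of_le_hamDist {k n m d : ℕ} (hmk : m ≤ k) (hkmd : k < m + d)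
    {Γ : Finset (Fin k ↪ Fin n)} (hΓ : ∀ σ ∈ Γ, ∀ τ ∈ Γ, σ ≠ τ → d ≤ hamDist σ τ) :
    Set.InjOn (fun σ => (Fin.castLEEmb hmk).trans σ) (Γ : Set (Fin k ↪ Fin n)) := by
  intro σ hσ τ hτ h
  by_contra hne
  have := hamDist_le_of_castLEEmb_trans_eq hmk h
  have := hΓ σ hσ τ hτ hne
  omega

theorem card_le_descFactorial_of_le_hamDist {k n d : ℕ} (hd : 1 ≤ d) (hdk : d ≤ k)
    {Γ : Finset (Fin k ↪ Fin n)} (hΓ : ∀ σ ∈ Γ, ∀ τ ∈ Γ, σ ≠ τ → d ≤ hamDist σ τ) :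
    #Γ ≤ n.descFactorial (k - d + 1) := by
  have hmk : k - d + 1 ≤ k := by omega
  calc #Γ ≤ Fintype.card (Fin (k - d + 1) ↪ Fin n) :=
        card_le_card_of_injOn _ (fun _ _ => mem_univ _)
          (injOn_castLEEmb_trans_of_le_hamDist hmk (by omega) hΓ)
    _ = n.descFactorial (k - d + 1) := by simp [Fintype.card_embedding_eq]

/-- Singleton bound for injection codes: if `Γ ⊆ S_{k,n}` has pairwise Hamming distance at
least `d` (`1 ≤ d ≤ k ≤ n`), then `|Γ| ≤ n!/(n − k + d − 1)!`. -/
theorem stmt_11 (k n d : ℕ) (hd1 : 1 ≤ d) (hdk : d ≤ k) (hkn : k ≤ n)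
    (Γ : Finset (Fin k ↪ Fin n))
    (hΓ : ∀ σ ∈ Γ, ∀ τ ∈ Γ, σ ≠ τ → d ≤ hamDist σ τ) :
    Γ.card ≤ Nat.factorial n / Nat.factorial (n - k + d - 1) := by
  have hsub : n - (k - d + 1) = n - k + d - 1 := by omega
  rw [← hsub, ← Nat.descFactorial_eq_div (by omega)]
  exact card_le_descFactorial_of_le_hamDist hd1 hdk hΓ
end

section
/- (Ball size in the injection metric) Let 0 ≤ k ≤ n, let σ ∈ S_{k,n}, and let r be a nonnegative integer with r ≤ k. Then the number of injections τ ∈ S_{k,n} with d(σ,τ) ≤ r equals Σ_{j=0}^{r} C(k,j) · Σ_{i=0}^{j} (−1)^i · C(j,i) · (n−k+j−i)!/(n−k)!. In particular this count does not depend on σ. -/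
open scoped Classical

open Finset

noncomputable def diffSet {k n : ℕ} (σ τ : Fin k ↪ Fin n) : Finset (Fin k) :=
  Finset.univ.filter fun i => σ i ≠ τ i

lemma mem_diffSet {k n : ℕ} {σ τ : Fin k ↪ Fin n} {i : Fin k} :
    i ∈ diffSet σ τ ↔ σ i ≠ τ i := by simp [diffSet]

noncomputable def aCount {k n : ℕ} (σ : Fin k ↪ Fin n) (E : Finset (Fin k)) : ℕ :=
  (Finset.univ.filter fun τ : Fin k ↪ Fin n => diffSet σ τ ⊆ E).card

noncomputable def bCount {k n : ℕ} (σ : Fin k ↪ Fin n) (D : Finset (Fin k)) : ℕ :=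
  (Finset.univ.filter fun τ : Fin k ↪ Fin n => diffSet σ τ = D).card

noncomputable def extEquiv {k n : ℕ} (σ : Fin k ↪ Fin n) (E : Finset (Fin k)) :
    {τ : Fin k ↪ Fin n // diffSet σ τ ⊆ E} ≃
      ({i : Fin k // i ∈ E} ↪ {x : Fin n // x ∉ (Eᶜ).image σ}) where
  toFun τh := ⟨fun i => ⟨τh.1 i.1, by
      intro hmem
      rw [Finset.mem_image] at hmem
      obtain ⟨j, hj, hje⟩ := hmem
      rw [Finset.mem_compl] at hj
      have hτj : σ j = τh.1 j := by
        by_contra hne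
        exact hj (τh.2 (mem_diffSet.2 hne))
      have : τh.1 j = τh.1 i.1 := by rw [← hτj]; exact hje
      exact hj ((τh.1.injective this) ▸ i.2)⟩, by
    intro a b hab
    have : τh.1 a.1 = τh.1 b.1 := congrArg Subtype.val hab
    exact Subtype.ext (τh.1.injective this)⟩
  invFun e := ⟨⟨fun i => if h : i ∈ E then (e ⟨i, h⟩).1 else σ i, by
      intro a b hab
      dsimp at hab
      by_cases ha : a ∈ E <;> by_cases hb : b ∈ E
      · rw [dif_pos ha, dif_pos hb] at hab
        have := e.injective (Subtype.ext hab)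
        exact congrArg Subtype.val this
      · rw [dif_pos ha, dif_neg hb] at hab
        exact absurd (Finset.mem_image.2 ⟨b, Finset.mem_compl.2 hb, hab.symm⟩)
          (e ⟨a, ha⟩).2
      · rw [dif_neg ha, dif_pos hb] at hab
        exact absurd (Finset.mem_image.2 ⟨a, Finset.mem_compl.2 ha, hab⟩)
          (e ⟨b, hb⟩).2
      · rw [dif_neg ha, dif_neg hb] at hab
        exact σ.injective hab⟩, by
    intro i hi
    rw [mem_diffSet] at hi
    by_contra hiE
    exact hi (dif_neg (t := fun h : i ∈ E => (e ⟨i, h⟩).1) (e := fun _ => σ i) hiE).symm⟩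
  left_inv τh := by
    apply Subtype.ext
    apply Function.Embedding.ext
    intro i
    dsimp
    by_cases h : i ∈ E
    · exact dif_pos h
    · refine (dif_neg h).trans ?_
      by_contra hne
      exact h (τh.2 (mem_diffSet.2 hne))
  right_inv e := by
    apply Function.Embedding.ext
    intro i
    apply Subtype.ext
    dsimp
    exact dif_pos (t := fun h : i.1 ∈ E => (e ⟨i.1, h⟩).1) (e := fun _ => σ i.1) i.2

lemma aCount_eq {k n : ℕ} (hkn : k ≤ n) (σ : Fin k ↪ Fin n) (E : Finset (Fin k)) :
    aCount σ E = (n - k + E.card).descFactorial E.card := by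
  have h1 : aCount σ E = Fintype.card {τ : Fin k ↪ Fin n // diffSet σ τ ⊆ E} := by
    rw [aCount, Fintype.card_subtype]
  rw [h1, Fintype.card_congr (extEquiv σ E), Fintype.card_embedding_eq]
  have hcard1 : Fintype.card {i : Fin k // i ∈ E} = E.card := Fintype.card_coe E
  have hcard2 : Fintype.card {x : Fin n // x ∉ (Eᶜ).image σ} = n - k + E.card := by
    rw [Fintype.card_subtype_compl]
    have : (Eᶜ.image σ).card = Eᶜ.card := Finset.card_image_of_injective _ σ.injective
    have hEc : (Eᶜ : Finset (Fin k)).card = k - E.card := by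
      rw [Finset.card_compl, Fintype.card_fin]
    have hle : E.card ≤ k := by
      simpa using Finset.card_le_card (Finset.subset_univ E)
    rw [Fintype.card_fin, Fintype.card_coe]
    omega
  rw [hcard1, hcard2]

lemma aCount_eq_sum {k n : ℕ} (σ : Fin k ↪ Fin n) (E : Finset (Fin k)) :
    aCount σ E = ∑ D ∈ E.powerset, bCount σ D := by
  rw [aCount, Finset.card_eq_sum_card_fiberwise
    (f := diffSet σ) (t := E.powerset)
    (fun τ hτ => Finset.mem_powerset.2 (Finset.mem_filter.1 hτ).2)]
  refine Finset.sum_congr rfl fun D hD => ?_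
  rw [bCount]
  congr 1
  ext τ
  simp only [Finset.mem_filter, Finset.mem_univ, true_and]
  exact ⟨fun h => h.2, fun h => ⟨h ▸ Finset.mem_powerset.1 hD, h⟩⟩

lemma neg_one_pow_sub {m g : ℕ} (h : g ≤ m) : ((-1:ℤ))^(m-g) = (-1)^m * (-1)^g := by
  have h2 : ((-1:ℤ))^m = (-1)^(m-g) * (-1)^g := by rw [← pow_add, Nat.sub_add_cancel h]
  have h3 : ((-1:ℤ))^g * (-1)^g = 1 := by rw [← pow_add, ← two_mul, pow_mul]; norm_num
  rw [h2, mul_assoc, h3, mul_one]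

lemma mobiusInner {α : Type*} [DecidableEq α] {F D : Finset α} (hFD : F ⊆ D) :
    ∑ E ∈ D.powerset.filter (fun E => F ⊆ E), ((-1:ℤ))^(D.card - E.card)
      = if F = D then 1 else 0 := by
  have key : ∑ E ∈ D.powerset.filter (fun E => F ⊆ E), ((-1:ℤ))^(D.card - E.card)
      = ∑ G ∈ (D \ F).powerset, ((-1:ℤ))^((D \ F).card - G.card) := by
    refine Finset.sum_nbij' (fun E => E \ F) (fun G => G ∪ F) ?_ ?_ ?_ ?_ ?_
    · intro E hE
      rw [Finset.mem_filter, Finset.mem_powerset] at hE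
      exact Finset.mem_powerset.2 (Finset.sdiff_subset_sdiff hE.1 (le_refl F))
    · intro G hG
      rw [Finset.mem_powerset] at hG
      rw [Finset.mem_filter, Finset.mem_powerset]
      constructor
      · exact Finset.union_subset (hG.trans (Finset.sdiff_subset)) hFD
      · exact Finset.subset_union_right
    · intro E hE
      rw [Finset.mem_filter] at hE
      exact Finset.sdiff_union_of_subset hE.2
    · intro G hG
      rw [Finset.mem_powerset] at hG
      exact Finset.union_sdiff_cancel_right
        (Finset.disjoint_left.2 fun x hxG hxF => (Finset.mem_sdiff.1 (hG hxG)).2 hxF)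
    · intro E hE
      rw [Finset.mem_filter, Finset.mem_powerset] at hE
      show ((-1:ℤ))^(D.card - E.card) = (-1)^((D \ F).card - (E \ F).card)
      congr 1
      have h1 : (E \ F).card = E.card - F.card := Finset.card_sdiff_of_subset hE.2
      have h2 : (D \ F).card = D.card - F.card := Finset.card_sdiff_of_subset hFD
      have h3 : F.card ≤ E.card := Finset.card_le_card hE.2
      have h4 : E.card ≤ D.card := Finset.card_le_card hE.1
      omega
  rw [key]
  have : ∀ G ∈ (D \ F).powerset, ((-1:ℤ))^((D \ F).card - G.card)
      = (-1)^(D \ F).card * (-1)^G.card := fun G hG =>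
    neg_one_pow_sub (Finset.card_le_card (Finset.mem_powerset.1 hG))
  rw [Finset.sum_congr rfl this, ← Finset.mul_sum,
    Finset.sum_powerset_neg_one_pow_card]
  by_cases h : F = D
  · rw [if_pos h, if_pos (by rw [h]; exact Finset.sdiff_self D), h,
      Finset.sdiff_self, Finset.card_empty, pow_zero, mul_one]
  · rw [if_neg h, if_neg, mul_zero]
    intro hc
    exact h (Finset.Subset.antisymm hFD (Finset.sdiff_eq_empty_iff_subset.mp hc))

lemma bCount_eq {k n : ℕ} (σ : Fin k ↪ Fin n) (D : Finset (Fin k)) :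
    (bCount σ D : ℤ) = ∑ E ∈ D.powerset, (-1)^(D.card - E.card) * (aCount σ E : ℤ) := by
  have step : ∀ E ∈ D.powerset, ((-1:ℤ))^(D.card - E.card) * (aCount σ E : ℤ)
      = ∑ F ∈ E.powerset, (-1)^(D.card - E.card) * (bCount σ F : ℤ) := by
    intro E _
    rw [aCount_eq_sum, Nat.cast_sum, Finset.mul_sum]
  rw [Finset.sum_congr rfl step]
  rw [Finset.sum_comm' (s' := fun F => D.powerset.filter (fun E => F ⊆ E))
    (t' := D.powerset) (by
      intro E F
      simp only [Finset.mem_powerset, Finset.mem_filter]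
      constructor
      · rintro ⟨h1, h2⟩; exact ⟨⟨h1, h2⟩, h2.trans h1⟩
      · rintro ⟨⟨h1, h2⟩, _⟩; exact ⟨h1, h2⟩)]
  have step2 : ∀ F ∈ D.powerset,
      (∑ E ∈ D.powerset.filter (fun E => F ⊆ E), ((-1:ℤ))^(D.card - E.card) * (bCount σ F : ℤ))
      = (if F = D then 1 else 0) * (bCount σ F : ℤ) := by
    intro F hF
    rw [← Finset.sum_mul, mobiusInner (Finset.mem_powerset.1 hF)]
  rw [Finset.sum_congr rfl step2]
  have step3 : ∀ F ∈ D.powerset, (if F = D then (1:ℤ) else 0) * (bCount σ F : ℤ)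
      = if F = D then (bCount σ D : ℤ) else 0 := by
    intro F _
    by_cases h : F = D <;> simp [h]
  rw [Finset.sum_congr rfl step3, Finset.sum_ite_eq' D.powerset D]
  simp


lemma bCount_formula {k n : ℕ} (hkn : k ≤ n) (σ : Fin k ↪ Fin n) (D : Finset (Fin k)) :
    (bCount σ D : ℤ) = ∑ i ∈ Finset.range (D.card + 1),
      (-1)^i * (Nat.choose D.card i : ℤ) *
        ((Nat.factorial (n - k + D.card - i) / Nat.factorial (n - k) : ℕ) : ℤ) := by
  set j := D.card with hj
  rw [bCount_eq, Finset.sum_powerset]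
  have step : ∀ s ∈ Finset.range (j+1),
      (∑ E ∈ Finset.powersetCard s D, ((-1:ℤ))^(j - E.card) * (aCount σ E : ℤ))
      = (Nat.choose j s : ℤ) * ((-1)^(j-s) * ((n-k+s).descFactorial s : ℤ)) := by
    intro s hs
    have hterm : ∀ E ∈ Finset.powersetCard s D, ((-1:ℤ))^(j - E.card) * (aCount σ E : ℤ)
        = (-1)^(j-s) * ((n-k+s).descFactorial s : ℤ) := by
      intro E hE
      have hcard := (Finset.mem_powersetCard.1 hE).2
      rw [aCount_eq hkn, hcard]
    rw [Finset.sum_congr rfl hterm, Finset.sum_const, Finset.card_powersetCard, ← hj,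
      nsmul_eq_mul]
  rw [Finset.sum_congr rfl step, ← Finset.sum_range_reflect]
  refine Finset.sum_congr rfl fun s hs => ?_
  rw [Finset.mem_range] at hs
  have hs' : s ≤ j := by omega
  have e1 : j + 1 - 1 - s = j - s := by omega
  have e5 : j - (j - s) = s := by omega
  have e3 : Nat.choose j (j - s) = Nat.choose j s := Nat.choose_symm hs'
  have e6 : n - k + (j - s) = n - k + j - s := by omega
  have e4 : (n - k + j - s).descFactorial (j - s)
      = Nat.factorial (n - k + j - s) / Nat.factorial (n - k) := by
    rw [Nat.descFactorial_eq_div (by omega),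
      show n - k + j - s - (j - s) = n - k by omega]
  rw [e1, e5, e3, e6, e4]
  ring

/-- Ball size in the injection metric: for any `σ ∈ S_{k,n}` and radius `r ≤ k`, the number
of injections `τ` with `d(σ,τ) ≤ r` equals
`Σ_{j=0}^{r} C(k,j) · Σ_{i=0}^{j} (−1)^i · C(j,i) · (n−k+j−i)!/(n−k)!`;
in particular it does not depend on `σ`. -/
theorem stmt_12 (k n : ℕ) (hkn : k ≤ n) (σ : Fin k ↪ Fin n) (r : ℕ) (hr : r ≤ k) :
    ((Finset.univ.filter fun τ : Fin k ↪ Fin n => hamDist σ τ ≤ r).card : ℤ) =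
      ∑ j ∈ Finset.range (r + 1), (Nat.choose k j : ℤ) *
        ∑ i ∈ Finset.range (j + 1), (-1) ^ i * (Nat.choose j i : ℤ) *
          ((Nat.factorial (n - k + j - i) / Nat.factorial (n - k) : ℕ) : ℤ) := by
  classical
  set t := Finset.univ.powerset.filter (fun D : Finset (Fin k) => D.card ≤ r) with ht0
  have h1 : (Finset.univ.filter fun τ : Fin k ↪ Fin n => hamDist σ τ ≤ r).card
      = ∑ D ∈ t, bCount σ D := by
    rw [Finset.card_eq_sum_card_fiberwise (f := diffSet σ) (t := t) (fun τ hτ => by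
      show diffSet σ τ ∈ Finset.univ.powerset.filter (fun D : Finset (Fin k) => D.card ≤ r)
      exact Finset.mem_filter.2 ⟨Finset.mem_powerset.2 (Finset.subset_univ _), (Finset.mem_filter.1 hτ).2⟩)]
    refine Finset.sum_congr rfl fun D hD => ?_
    rw [bCount]
    congr 1
    ext τ
    simp only [Finset.mem_filter, Finset.mem_univ, true_and]
    constructor
    · exact fun h => h.2
    · intro h
      refine ⟨?_, h⟩
      have hDr := (Finset.mem_filter.1 hD).2
      show (diffSet σ τ).card ≤ r
      rw [h]
      exact hDr
  rw [h1, Nat.cast_sum]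
  have ht : t = (Finset.range (r+1)).biUnion (fun j => Finset.powersetCard j Finset.univ) := by
    ext D
    simp only [ht0, Finset.mem_filter, Finset.mem_powerset, Finset.mem_biUnion,
      Finset.mem_range, Finset.mem_powersetCard_univ]
    constructor
    · rintro ⟨-, h⟩; exact ⟨D.card, by omega, rfl⟩
    · rintro ⟨j, hj, hDj⟩; exact ⟨Finset.subset_univ _, by omega⟩
  rw [ht, Finset.sum_biUnion (fun i _ j _ hij => Finset.disjoint_left.2 fun D hDi hDj =>
    hij (by rw [← Finset.mem_powersetCard_univ.1 hDi, ← Finset.mem_powersetCard_univ.1 hDj]))]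
  refine Finset.sum_congr rfl fun j hj => ?_
  have hform : ∀ D ∈ Finset.powersetCard j Finset.univ, ((bCount σ D : ℤ))
      = ∑ i ∈ Finset.range (j + 1), (-1) ^ i * (Nat.choose j i : ℤ) *
          ((Nat.factorial (n - k + j - i) / Nat.factorial (n - k) : ℕ) : ℤ) := by
    intro D hD
    have hc : D.card = j := Finset.mem_powersetCard_univ.1 hD
    rw [bCount_formula hkn, hc]
  rw [Finset.sum_congr rfl hform, Finset.sum_const, Finset.card_powersetCard,
    Finset.card_univ, Fintype.card_fin, nsmul_eq_mul]
end

section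
/- (Sphere packing bound for injection codes) Let 0 ≤ k ≤ n, let d = 2e + 1 be an odd positive integer with d ≤ k, and let Γ ⊆ S_{k,n} be a set of injections such that any two distinct elements of Γ have Hamming distance at least d. Then |Γ| · b_e ≤ n!/(n−k)!, where b_e = Σ_{j=0}^{e} C(k,j) · Σ_{i=0}^{j} (−1)^i · C(j,i) · (n−k+j−i)!/(n−k)! is the size of any ball of radius e in S_{k,n}. -/
open scoped Classical

/-!
Balls of radius `e` around codewords at pairwise distance at least `2e + 1` are disjoint by the
triangle inequality, so their sizes add up to at most `|S_{k,n}|`. All balls have the same size: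
fixing `σ` on `m` positions leaves `(n - m)_{(k - m)}` injections, so inclusion–exclusion over the
positions of a `j`-set `A` at which `τ` still agrees with `σ` counts the injections differing from
`σ` exactly on `A` as `Σ_i (-1)^i C(j,i) (n-k+j-i)_{(j-i)}`.
-/

open Finset Function

/-- The number of injections `[j] → [m + j]` without fixed points. -/
def injDerangements (m j : ℕ) : ℤ :=
  ∑ i ∈ range (j + 1), (-1) ^ i * (j.choose i : ℤ) * ((m + j - i).descFactorial (j - i) : ℤ)

section HammingBall

variable {α β : Type*} [Fintype α] [Fintype β] [DecidableEq β]

noncomputable def hammingBall (σ : α ↪ β) (e : ℕ) : Finset (α ↪ β) :=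
  {τ | hammingDist ⇑σ ⇑τ ≤ e}

theorem sum_card_hammingBall_le (Γ : Finset (α ↪ β)) (e : ℕ)
    (hΓ : ∀ σ ∈ Γ, ∀ τ ∈ Γ, σ ≠ τ → 2 * e + 1 ≤ hammingDist ⇑σ ⇑τ) :
    ∑ σ ∈ Γ, #(hammingBall σ e) ≤ Fintype.card (α ↪ β) := by
  rw [← card_biUnion]
  · exact card_le_univ _
  · intro σ hσ τ hτ hne
    refine disjoint_left.2 fun ρ hρσ hρτ => ?_
    have hστ := hΓ σ hσ τ hτ hne
    have htri := hammingDist_triangle_right (⇑σ) (⇑τ) (⇑ρ)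
    simp only [hammingBall, mem_filter] at hρσ hρτ
    omega

variable [DecidableEq α]

def embeddingsAgreeingOnEquiv (σ : α ↪ β) (s : Finset α) :
    {τ : α ↪ β // ∀ i ∈ s, τ i = σ i} ≃ ((sᶜ : Finset α) ↪ ((s.map σ)ᶜ : Finset β)) where
  toFun τ :=
    { toFun i := ⟨τ.1 i, by
        simp only [mem_compl, mem_map, not_exists, not_and]
        intro x hx hxi
        rw [← τ.2 x hx] at hxi
        exact mem_compl.1 i.2 (τ.1.injective hxi ▸ hx)⟩
      inj' _ _ h := Subtype.ext (τ.1.injective (congrArg Subtype.val h)) }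
  invFun f :=
    ⟨⟨fun i => if h : i ∈ s then σ i else f ⟨i, mem_compl.2 h⟩, by
      refine Injective.dite (· ∈ s) (f := fun i => σ i.1)
        (f' := fun i => (f ⟨i.1, mem_compl.2 i.2⟩ : β))
        (σ.injective.comp Subtype.val_injective) ?_ ?_
      · intro x y h
        simpa [Subtype.ext_iff] using f.injective (Subtype.ext h)
      · intro x y hx hy h
        exact mem_compl.1 (f ⟨y, _⟩).2 (h ▸ mem_map_of_mem σ hx)⟩,
      fun i hi => dif_pos hi⟩
  left_inv τ := Subtype.ext <| Embedding.ext fun i => by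
    by_cases hi : i ∈ s
    · simp [hi, τ.2 i hi]
    · simp only [Embedding.coeFn_mk, dif_neg hi]
      rfl
  right_inv f := Embedding.ext fun i => Subtype.ext <| by simp [mem_compl.1 i.2]

theorem card_embeddings_agreeing_on (σ : α ↪ β) (s : Finset α) :
    #{τ : α ↪ β | ∀ i ∈ s, τ i = σ i} =
      (Fintype.card β - #s).descFactorial (Fintype.card α - #s) := by
  rw [← Fintype.card_subtype, Fintype.card_congr (embeddingsAgreeingOnEquiv σ s),
    Fintype.card_embedding_eq, Fintype.card_coe, Fintype.card_coe, card_compl, card_compl,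
    card_map]

theorem card_embeddings_differing_exactly_on (h : Fintype.card α ≤ Fintype.card β)
    (σ : α ↪ β) (A : Finset α) :
    (#{τ : α ↪ β | ({i | σ i ≠ τ i} : Finset α) = A} : ℤ) =
      injDerangements (Fintype.card β - Fintype.card α) #A := by
  set agree : Finset α → Finset (α ↪ β) := fun s => {τ | ∀ i ∈ s, τ i = σ i}
  have hincl_excl := inclusion_exclusion_sum_inf_compl (G := ℤ) A (fun i => agree {i})
    (fun τ => if τ ∈ agree Aᶜ then 1 else 0)
  have hexact : ({τ : α ↪ β | ({i | σ i ≠ τ i} : Finset α) = A} : Finset (α ↪ β)) =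
      {τ ∈ A.inf fun i => (agree {i})ᶜ | τ ∈ agree Aᶜ} := by
    ext τ
    simp only [agree, mem_filter, mem_univ, true_and, mem_inf, mem_compl, mem_singleton,
      forall_eq, Finset.ext_iff]
    grind
  have hagree : ∀ t ∈ A.powerset, ∑ τ ∈ t.inf fun i => agree {i},
      (if τ ∈ agree Aᶜ then (1 : ℤ) else 0) = #(agree (Aᶜ ∪ t)) := by
    intro t ht
    rw [sum_boole]
    congr 2
    ext τ
    simp only [agree, mem_filter, mem_univ, true_and, mem_inf, mem_singleton, forall_eq, mem_union]
    grind
  have hcount : ∀ t ∈ A.powerset, #(agree (Aᶜ ∪ t)) =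
      (Fintype.card β - Fintype.card α + #A - #t).descFactorial (#A - #t) := by
    intro t ht
    have hA : #A ≤ Fintype.card α := card_le_univ A
    have htA := card_le_card (mem_powerset.1 ht)
    rw [card_embeddings_agreeing_on, card_union_of_disjoint
      (disjoint_compl_left.mono_right (mem_powerset.1 ht)), card_compl]
    congr 1 <;> omega
  rw [hexact, ← sum_boole, hincl_excl,
    sum_congr rfl fun t ht => by rw [hagree t ht, hcount t ht],
    sum_powerset_apply_card (fun m => (-1) ^ m •
      ((Fintype.card β - Fintype.card α + #A - m).descFactorial (#A - m) : ℤ))]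
  refine sum_congr rfl fun m _ => ?_
  rw [nsmul_eq_mul, smul_eq_mul]
  ring

theorem card_hammingBall (h : Fintype.card α ≤ Fintype.card β) (σ : α ↪ β) (e : ℕ) :
    (#(hammingBall σ e) : ℤ) = ∑ j ∈ range (e + 1),
      ((Fintype.card α).choose j : ℤ) * injDerangements (Fintype.card β - Fintype.card α) j := by
  rw [hammingBall, card_eq_sum_card_fiberwise (f := fun τ : α ↪ β => hammingDist ⇑σ ⇑τ)
    (t := range (e + 1)) fun τ hτ => mem_range_succ_iff.2 (mem_filter.1 hτ).2]
  push_cast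
  refine sum_congr rfl fun j hj => ?_
  have hj : j ≤ e := mem_range_succ_iff.1 hj
  rw [card_eq_sum_card_fiberwise (f := fun τ : α ↪ β => ({i | σ i ≠ τ i} : Finset α))
    (t := powersetCard j univ) ?_]
  swap
  · exact fun τ hτ => mem_powersetCard_univ.2 (mem_filter.1 hτ).2
  push_cast
  rw [sum_congr rfl fun A hA => ?_, sum_const, card_powersetCard, card_univ, nsmul_eq_mul]
  obtain rfl := mem_powersetCard_univ.1 hA
  rw [← card_embeddings_differing_exactly_on h σ A]
  congr 2
  ext τ
  simp only [hammingDist, mem_filter, mem_univ, true_and]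
  constructor
  · exact And.right
  · rintro rfl
    exact ⟨⟨hj, rfl⟩, rfl⟩

end HammingBall
theorem stmt_13_general (k n e : ℕ) (hkn : k ≤ n)
    (Γ : Finset (Fin k ↪ Fin n))
    (hΓ : ∀ σ ∈ Γ, ∀ τ ∈ Γ, σ ≠ τ → 2 * e + 1 ≤ hamDist σ τ) :
    (Γ.card : ℤ) *
        (∑ j ∈ Finset.range (e + 1), (Nat.choose k j : ℤ) *
          ∑ i ∈ Finset.range (j + 1), (-1) ^ i * (Nat.choose j i : ℤ) *
            ((Nat.factorial (n - k + j - i) / Nat.factorial (n - k) : ℕ) : ℤ)) ≤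
      ((Nat.factorial n / Nat.factorial (n - k) : ℕ) : ℤ) := by
  have hcard : Fintype.card (Fin k) ≤ Fintype.card (Fin n) := by simpa using hkn
  have hball : ∀ σ : Fin k ↪ Fin n, (#(hammingBall σ e) : ℤ) =
      ∑ j ∈ range (e + 1), (k.choose j : ℤ) *
        ∑ i ∈ range (j + 1), (-1) ^ i * (j.choose i : ℤ) *
          (((n - k + j - i).factorial / (n - k).factorial : ℕ) : ℤ) := fun σ => by
    rw [card_hammingBall hcard, Fintype.card_fin, Fintype.card_fin]
    refine sum_congr rfl fun j _ => congrArg _ <| sum_congr rfl fun i hi => ?_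
    have := mem_range_succ_iff.1 hi
    rw [Nat.descFactorial_eq_div (by omega), show n - k + j - i - (j - i) = n - k by omega]
  calc (#Γ : ℤ) * _ = ∑ σ ∈ Γ, (#(hammingBall σ e) : ℤ) := by simp [hball]
    _ ≤ Fintype.card (Fin k ↪ Fin n) := by exact_mod_cast sum_card_hammingBall_le Γ e hΓ
    _ = _ := by rw [Fintype.card_embedding_eq, Fintype.card_fin, Fintype.card_fin,
      Nat.descFactorial_eq_div hkn]

/-- Sphere packing bound for injection codes: if `d = 2e + 1 ≤ k` is odd and `Γ ⊆ S_{k,n}`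
has pairwise Hamming distance at least `d`, then `|Γ| · b_e ≤ n!/(n−k)!`, where
`b_e = Σ_{j=0}^{e} C(k,j) · Σ_{i=0}^{j} (−1)^i · C(j,i) · (n−k+j−i)!/(n−k)!`
is the size of any ball of radius `e` in `S_{k,n}`. -/
theorem stmt_13 (k n e : ℕ) (hkn : k ≤ n) (hd : 2 * e + 1 ≤ k)
    (Γ : Finset (Fin k ↪ Fin n))
    (hΓ : ∀ σ ∈ Γ, ∀ τ ∈ Γ, σ ≠ τ → 2 * e + 1 ≤ hamDist σ τ) :
    (Γ.card : ℤ) *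
        (∑ j ∈ Finset.range (e + 1), (Nat.choose k j : ℤ) *
          ∑ i ∈ Finset.range (j + 1), (-1) ^ i * (Nat.choose j i : ℤ) *
            ((Nat.factorial (n - k + j - i) / Nat.factorial (n - k) : ℕ) : ℤ)) ≤
      ((Nat.factorial n / Nat.factorial (n - k) : ℕ) : ℤ) :=
  stmt_13_general k n e hkn Γ hΓ
end

section
/- Let 2 ≤ k ≤ n. If there exist r mutually orthogonal k × n Latin rectangles, then M(n, k, k−1) ≥ rn; that is, there exists a set Γ ⊆ S_{k,n} of size rn such that any two distinct elements of Γ have Hamming distance at least k − 1. -/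
/-- `L : [k] × [n] → [n]` is a `k × n` Latin rectangle: every row is a permutation of `[n]`
and the entries in each column are pairwise distinct. -/
def IsLatinRect {k n : ℕ} (L : Fin k → Fin n → Fin n) : Prop :=
  (∀ i, Function.Bijective (L i)) ∧ ∀ j, ∀ i i' : Fin k, i ≠ i' → L i j ≠ L i' j

/-- Two `k × n` Latin rectangles are orthogonal: `(i,j) ↦ (L(i,j), L'(i,j))` is injective. -/
def OrthogLatinRect {k n : ℕ} (L L' : Fin k → Fin n → Fin n) : Prop :=
  Function.Injective fun p : Fin k × Fin n => (L p.1 p.2, L' p.1 p.2)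

/-!
Read each Latin rectangle `L_a` row by row: for a symbol `j`, the column in which `j` occurs in
row `i` gives an injection `σ_{a,j} : [k] → [n]`, injective because the columns of `L_a` have
distinct entries. Two codewords `σ_{a,j}` and `σ_{b,j'}` agree in at most one position: within
one rectangle the rows are permutations, so a single agreement forces `j = j'`; for `a ≠ b`, two
agreements in rows `i ≠ i'` would give two distinct cells on which `(L_a, L_b)` takes the same
pair of symbols `(j, j')`, against orthogonality. Hence the `r n` codewords are distinct (as `k ≥ 2`)
and at pairwise distance at least `k - 1`.
-/

theorem le_hamDist_of_agree_subsingleton {k n : ℕ} {σ τ : Fin k ↪ Fin n}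
    (h : ∀ i i', σ i = τ i → σ i' = τ i' → i = i') : k - 1 ≤ hamDist σ τ := by
  have hagree : (Finset.univ.filter fun i => σ i = τ i).card ≤ 1 :=
    Finset.card_le_one.2 fun i hi i' hi' =>
      h i i' (Finset.mem_filter.1 hi).2 (Finset.mem_filter.1 hi').2
  have htot := Finset.card_filter_add_card_filter_not
    (s := (Finset.univ : Finset (Fin k))) (p := fun i => σ i = τ i)
  rw [Finset.card_univ, Fintype.card_fin] at htot
  simp only [hamDist, ne_eq]
  omega

namespace IsLatinRect

variable {k n : ℕ} {L : Fin k → Fin n → Fin n}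

noncomputable def rowEquiv (hL : IsLatinRect L) (i : Fin k) : Fin n ≃ Fin n :=
  Equiv.ofBijective (L i) (hL.1 i)

theorem apply_rowEquiv_symm (hL : IsLatinRect L) (i : Fin k) (j : Fin n) :
    L i ((hL.rowEquiv i).symm j) = j :=
  (hL.rowEquiv i).apply_symm_apply j

theorem rowEquiv_symm_injective (hL : IsLatinRect L) (j : Fin n) :
    Function.Injective fun i => (hL.rowEquiv i).symm j := by
  intro i i' h
  by_contra hne
  refine hL.2 ((hL.rowEquiv i').symm j) i i' hne ?_
  calc L i ((hL.rowEquiv i').symm j) = L i ((hL.rowEquiv i).symm j) := congrArg (L i) h.symm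
    _ = j := hL.apply_rowEquiv_symm i j
    _ = L i' ((hL.rowEquiv i').symm j) := (hL.apply_rowEquiv_symm i' j).symm

noncomputable def symbolPos (hL : IsLatinRect L) (j : Fin n) : Fin k ↪ Fin n :=
  ⟨fun i => (hL.rowEquiv i).symm j, hL.rowEquiv_symm_injective j⟩

theorem apply_symbolPos (hL : IsLatinRect L) (j : Fin n) (i : Fin k) :
    L i (hL.symbolPos j i) = j :=
  hL.apply_rowEquiv_symm i j

theorem eq_of_symbolPos_apply_eq (hL : IsLatinRect L) {j j' : Fin n} {i : Fin k}
    (h : hL.symbolPos j i = hL.symbolPos j' i) : j = j' := by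
  rw [← hL.apply_symbolPos j i, h, hL.apply_symbolPos]

end IsLatinRect

theorem OrthogLatinRect.eq_of_symbolPos_apply_eq_apply_eq {k n : ℕ}
    {L L' : Fin k → Fin n → Fin n} (horth : OrthogLatinRect L L')
    (hL : IsLatinRect L) (hL' : IsLatinRect L') {j j' : Fin n} {i i' : Fin k}
    (h : hL.symbolPos j i = hL'.symbolPos j' i)
    (h' : hL.symbolPos j i' = hL'.symbolPos j' i') : i = i' := by
  have hcells : ((i, hL.symbolPos j i) : Fin k × Fin n) = (i', hL.symbolPos j i') := by
    apply horth
    simp only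
    rw [hL.apply_symbolPos j i, hL.apply_symbolPos j i', h, h', hL'.apply_symbolPos j' i,
      hL'.apply_symbolPos j' i']
  exact congrArg Prod.fst hcells

section MOLR

variable {k n r : ℕ} {L : Fin r → Fin k → Fin n → Fin n} (hL : ∀ a, IsLatinRect (L a))

noncomputable def molrCode (p : Fin r × Fin n) : Fin k ↪ Fin n :=
  (hL p.1).symbolPos p.2

variable {hL}

theorem eq_of_molrCode_apply_eq_apply_eq
    (horth : ∀ a b, a ≠ b → OrthogLatinRect (L a) (L b)) {p q : Fin r × Fin n}
    {i i' : Fin k} (hii' : i ≠ i') (h : molrCode hL p i = molrCode hL q i)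
    (h' : molrCode hL p i' = molrCode hL q i') : p = q := by
  obtain ⟨a, j⟩ := p
  obtain ⟨b, j'⟩ := q
  by_cases hab : a = b
  · subst hab
    exact Prod.ext rfl ((hL a).eq_of_symbolPos_apply_eq h)
  · exact absurd ((horth a b hab).eq_of_symbolPos_apply_eq_apply_eq _ _ h h') hii'

theorem molrCode_injective (hk : 2 ≤ k)
    (horth : ∀ a b, a ≠ b → OrthogLatinRect (L a) (L b)) :
    Function.Injective (molrCode hL) := fun p q hpq =>
  eq_of_molrCode_apply_eq_apply_eq horth (i := ⟨0, by omega⟩) (i' := ⟨1, by omega⟩)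
    (by simp [Fin.ext_iff]) (by rw [hpq]) (by rw [hpq])

theorem le_hamDist_molrCode (horth : ∀ a b, a ≠ b → OrthogLatinRect (L a) (L b))
    {p q : Fin r × Fin n} (hpq : p ≠ q) : k - 1 ≤ hamDist (molrCode hL p) (molrCode hL q) :=
  le_hamDist_of_agree_subsingleton fun i i' h h' => by
    by_contra hii'
    exact hpq (eq_of_molrCode_apply_eq_apply_eq horth hii' h h')

end MOLR

theorem stmt_15_general (k n r : ℕ) (hk : 2 ≤ k)
    (L : Fin r → Fin k → Fin n → Fin n)
    (hL : ∀ a, IsLatinRect (L a))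
    (horth : ∀ a b, a ≠ b → OrthogLatinRect (L a) (L b)) :
    ∃ Γ : Finset (Fin k ↪ Fin n), Γ.card = r * n ∧
      ∀ σ ∈ Γ, ∀ τ ∈ Γ, σ ≠ τ → k - 1 ≤ hamDist σ τ := by
  refine ⟨Finset.univ.image (molrCode hL), ?_, ?_⟩
  · rw [Finset.card_image_of_injective _ (molrCode_injective hk horth)]
    simp
  · simp only [Finset.mem_image, Finset.mem_univ, true_and]
    rintro _ ⟨p, rfl⟩ _ ⟨q, rfl⟩ hne
    exact le_hamDist_molrCode horth fun hpq => hne (congrArg _ hpq)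

/-- If there exist `r` mutually orthogonal `k × n` Latin rectangles (`2 ≤ k ≤ n`), then
`M(n, k, k−1) ≥ rn`: there is a set `Γ ⊆ S_{k,n}` of size `r·n` whose distinct elements
have pairwise Hamming distance at least `k − 1`. -/
theorem stmt_15 (k n r : ℕ) (hk : 2 ≤ k) (hkn : k ≤ n)
    (L : Fin r → Fin k → Fin n → Fin n)
    (hL : ∀ a, IsLatinRect (L a))
    (horth : ∀ a b, a ≠ b → OrthogLatinRect (L a) (L b)) :
    ∃ Γ : Finset (Fin k ↪ Fin n), Γ.card = r * n ∧
      ∀ σ ∈ Γ, ∀ τ ∈ Γ, σ ≠ τ → k - 1 ≤ hamDist σ τ :=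
  stmt_15_general k n r hk L hL horth
end

section
/- For n ≥ 2, the maximum size of a permutation code in S_n with minimum Hamming distance 3 is n!/2; that is, M(n,3) = n!/2. In particular, any two distinct even permutations of [n] have Hamming distance at least 3 (so the alternating group A_n is such a code of size n!/2), and every subset of S_n with pairwise Hamming distance at least 3 has size at most n!/2. -/
open scoped Classical

/-- The Hamming distance between two permutations `σ, τ ∈ S_n`:
the number of positions `i ∈ [n]` with `σ(i) ≠ τ(i)`. -/
noncomputable def hamDistPerm {n : ℕ} (σ τ : Equiv.Perm (Fin n)) : ℕ :=
  (Finset.univ.filter fun i => σ i ≠ τ i).card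

lemma hamDistPerm_eq_support {n : ℕ} (σ τ : Equiv.Perm (Fin n)) :
    hamDistPerm σ τ = (τ⁻¹ * σ).support.card := by
  unfold hamDistPerm
  rw [Equiv.Perm.support]
  congr 1
  ext i
  simp only [Finset.mem_filter, Finset.mem_univ, true_and, Equiv.Perm.mul_apply, ne_eq]
  exact (not_congr Equiv.Perm.inv_eq_iff_eq.symm).trans (Equiv.Perm.mem_support (f := τ⁻¹ * σ) (x := i)).symm

/-- `M(n,3) = n!/2` for `n ≥ 2`: any two distinct even permutations of `[n]` have Hamming
distance at least `3` (so the alternating group is a permutation code with minimum distance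
`3` of size `n!/2`), there is a code of size `n!/2` with pairwise distance at least `3`, and
every subset of `S_n` with pairwise Hamming distance at least `3` has size at most `n!/2`. -/
theorem stmt_16 (n : ℕ) (hn : 2 ≤ n) :
    (∀ σ τ : Equiv.Perm (Fin n), Equiv.Perm.sign σ = 1 → Equiv.Perm.sign τ = 1 → σ ≠ τ →
      3 ≤ hamDistPerm σ τ) ∧
    (∃ Γ : Finset (Equiv.Perm (Fin n)),
      (∀ σ ∈ Γ, ∀ τ ∈ Γ, σ ≠ τ → 3 ≤ hamDistPerm σ τ) ∧
        Γ.card = Nat.factorial n / 2) ∧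
    (∀ Γ : Finset (Equiv.Perm (Fin n)),
      (∀ σ ∈ Γ, ∀ τ ∈ Γ, σ ≠ τ → 3 ≤ hamDistPerm σ τ) →
        Γ.card ≤ Nat.factorial n / 2) := by
  have hnt : Nontrivial (Fin n) := Fin.nontrivial_iff_two_le.mpr hn
  -- Part 1
  have part1 : ∀ σ τ : Equiv.Perm (Fin n), Equiv.Perm.sign σ = 1 → Equiv.Perm.sign τ = 1 →
      σ ≠ τ → 3 ≤ hamDistPerm σ τ := by
    intro σ τ hσ hτ hne
    rw [hamDistPerm_eq_support]
    have hne1 : τ⁻¹ * σ ≠ 1 := by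
      intro h
      exact hne (by rw [eq_comm, ← inv_mul_eq_one, h])
    have hge : 2 ≤ (τ⁻¹ * σ).support.card := Equiv.Perm.one_lt_card_support_of_ne_one hne1
    by_contra h
    push_neg at h
    have hcard : (τ⁻¹ * σ).support.card = 2 := by omega
    have hswap : (τ⁻¹ * σ).IsSwap := Equiv.Perm.card_support_eq_two.mp hcard
    obtain ⟨a, b, hab, hs⟩ := hswap
    have : Equiv.Perm.sign (τ⁻¹ * σ) = -1 := by rw [hs, Equiv.Perm.sign_swap hab]
    rw [map_mul, map_inv, hσ, hτ] at this
    norm_num at this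
  refine ⟨part1, ?_, ?_⟩
  · -- existence: alternating group
    refine ⟨Finset.univ.filter fun σ => Equiv.Perm.sign σ = 1, ?_, ?_⟩
    · intro σ hσ τ hτ hne
      simp only [Finset.mem_filter] at hσ hτ
      exact part1 σ τ hσ.2 hτ.2 hne
    · have h1 : (Finset.univ.filter fun σ : Equiv.Perm (Fin n) => Equiv.Perm.sign σ = 1).card
          = Fintype.card (alternatingGroup (Fin n)) := by
        rw [Fintype.card_subtype]
        congr 1
        ext σ
        simp [Equiv.Perm.mem_alternatingGroup]
      have h2 := two_mul_card_alternatingGroup (α := Fin n)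
      rw [Fintype.card_perm, Fintype.card_fin] at h2
      omega
  · -- upper bound
    intro Γ hΓ
    set a : Fin n := ⟨0, by omega⟩
    set b : Fin n := ⟨1, by omega⟩
    have hab : a ≠ b := by simp [a, b, Fin.ext_iff]
    set s : Equiv.Perm (Fin n) := Equiv.swap a b with hs
    have key : ∀ σ : Equiv.Perm (Fin n), hamDistPerm σ (s * σ) = 2 := by
      intro σ
      rw [hamDistPerm_eq_support]
      have : (s * σ)⁻¹ * σ = σ⁻¹ * s * σ := by
        rw [mul_inv_rev, hs, Equiv.swap_inv, mul_assoc]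
      rw [this]
      have := Equiv.Perm.support_conj (σ := σ⁻¹) (τ := s)
      rw [show σ⁻¹ * s * σ = σ⁻¹ * s * σ⁻¹⁻¹ by rw [inv_inv]] 
      rw [this, Finset.card_map, Equiv.Perm.card_support_swap hab]
    have hdisj : Disjoint Γ (Γ.image fun σ => s * σ) := by
      rw [Finset.disjoint_right]
      intro τ hτ hτΓ
      obtain ⟨σ, hσΓ, rfl⟩ := Finset.mem_image.mp hτ
      have hne : σ ≠ s * σ := by
        intro h
        have : s = 1 := by
          have := congrArg (· * σ⁻¹) h
          simpa [mul_assoc] using this.symm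
        exact hab (Equiv.swap_eq_one_iff.mp (by simpa [hs] using this))
      have := hΓ σ hσΓ (s * σ) hτΓ hne
      rw [key σ] at this
      omega
    have hinj : ∀ x ∈ Γ, ∀ y ∈ Γ, s * x = s * y → x = y := by
      intro x _ y _ h
      exact mul_left_cancel h
    have hcardim : (Γ.image fun σ => s * σ).card = Γ.card := Finset.card_image_of_injOn hinj
    have hunion : (Γ ∪ Γ.image fun σ => s * σ).card = 2 * Γ.card := by
      rw [Finset.card_union_of_disjoint hdisj, hcardim]; ring
    have hle : (Γ ∪ Γ.image fun σ => s * σ).card ≤ Nat.factorial n := by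
      calc (Γ ∪ Γ.image fun σ => s * σ).card ≤ (Finset.univ : Finset (Equiv.Perm (Fin n))).card :=
            Finset.card_le_card (Finset.subset_univ _)
        _ = Nat.factorial n := by rw [Finset.card_univ, Fintype.card_perm, Fintype.card_fin]
    omega
end
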